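/- arXiv:2209.08373 — 6 statements merged into one kernel-verified Lean document; each statement's English description precedes it below -/
import Mathlib

section
/- Let G be a k-connected graph, S a minimum vertex-cut of G, and F a fragment of G to S (i.e., the union of at least one but not all components of G - S). Then the graph G⟨S⟩[S ∪ F], obtained from the induced subgraph on S ∪ V(F) by adding all edges making S a clique, is k-connected. -/
open SimpleGraph Set

/-- `KConn G k` means the vertex connectivity of `G` is at least `k`:
removing any set of fewer than `k` vertices leaves at least two vertices
and a connected graph. -/
def KConn {V : Type*} (G : SimpleGraph V) (k : ℕ) : Prop :=
  ∀ S : Set V, S.ncard < k → 2 ≤ Sᶜ.ncard ∧ (G.induce Sᶜ).Connected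

/-- `addClique G S` is `G⟨S⟩`: the graph `G` with all edges among `S` added. -/
def addClique {V : Type*} (G : SimpleGraph V) (S : Set V) : SimpleGraph V :=
  G ⊔ SimpleGraph.fromRel (fun u v => u ∈ S ∧ v ∈ S)

/-- `IsSemifragment G S F`: `F` is a union of at least one but not all
connected components of `G - S`, i.e. `F` is a nonempty subset of `Sᶜ`,
its complement in `Sᶜ` is nonempty, and there are no edges from `F` to
the rest of `G - S`. -/
def IsSemifragment {V : Type*} (G : SimpleGraph V) (S F : Set V) : Prop :=
  F.Nonempty ∧ (Sᶜ \ F).Nonempty ∧ F ⊆ Sᶜ ∧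
    ∀ u ∈ F, ∀ w ∈ Sᶜ \ F, ¬ G.Adj u w

/-- `(G, C) ∈ 𝒦ᵇ_k(t)`: `G` is `k`-connected, `C` is a clique of order `k`,
`G - V(C)` is bipartite with every one of its vertices having degree (in `G`)
at least `k + t`, and adjacent vertices outside `C` have no common neighbor. -/
def KClassB {V : Type*} (G : SimpleGraph V) (C : Set V) (k t : ℕ) : Prop :=
  KConn G k ∧ C.ncard = k ∧ (∀ u ∈ C, ∀ v ∈ C, u ≠ v → G.Adj u v) ∧
    (G.induce Cᶜ).Colorable 2 ∧ (∀ v ∈ Cᶜ, k + t ≤ (G.neighborSet v).ncard) ∧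
    ∀ u ∈ Cᶜ, ∀ v ∈ Cᶜ, G.Adj u v → ∀ w, ¬(G.Adj u w ∧ G.Adj v w)

/-! For `T ⊆ S ∪ F` with `|T| < k`, every vertex of `H - T`, where `H = G⟨S⟩[S ∪ F]`, is joined
inside `H - T` to a vertex of `S \ T`: the graph `G - T` is connected and contains a vertex outside
`S ∪ F`, and a path from `F` to it must leave `F` through `S`, since `F` has no edges to the rest
of `G - S`. As `S \ T` is nonempty and a clique in `H`, the graph `H - T` is connected. -/

namespace SimpleGraph

variable {V : Type*} {G : SimpleGraph V}

theorem Preconnected.mem_of_adj_closed (hG : G.Preconnected) {A : Set V}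
    (hA : ∀ x ∈ A, ∀ y, G.Adj x y → y ∈ A) {a : V} (ha : a ∈ A) (b : V) : b ∈ A := by
  obtain ⟨p⟩ := hG a b
  induction p with
  | nil => exact ha
  | cons hadj _ ih => exact ih (hA _ ha _ hadj)

theorem connected_induce_of_forall_reachable_clique {W C : Set V} (hC : G.IsClique C)
    (hW : W.Nonempty) (h : ∀ x : W, ∃ c : W, (c : V) ∈ C ∧ (G.induce W).Reachable x c) :
    (G.induce W).Connected := by
  have := hW.to_subtype
  refine connected_iff _ |>.mpr ⟨fun a b => ?_, inferInstance⟩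
  obtain ⟨ca, hca, hra⟩ := h a
  obtain ⟨cb, hcb, hrb⟩ := h b
  refine hra.trans (Reachable.trans ?_ hrb.symm)
  by_cases hc : ca = cb
  · rw [hc]
  · exact Adj.reachable (hC hca hcb (Subtype.coe_ne_coe.mpr hc))

end SimpleGraph

theorem isClique_addClique {V : Type*} (G : SimpleGraph V) (S : Set V) :
    (addClique G S).IsClique S :=
  fun _ hu _ hv huv => Or.inr ((fromRel_adj _ _ _).mpr ⟨huv, Or.inl ⟨hu, hv⟩⟩)

theorem le_addClique {V : Type*} (G : SimpleGraph V) (S : Set V) : G ≤ addClique G S :=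
  le_sup_left

theorem kConn_induce_of_forall_diff {V : Type*} {G : SimpleGraph V} {U : Set V} {k : ℕ}
    (h : ∀ T ⊆ U, T.ncard < k → 2 ≤ (U \ T).ncard ∧ (G.induce (U \ T)).Connected) :
    KConn (G.induce U) k := by
  intro T hT
  have hcard : (Subtype.val '' T).ncard = T.ncard :=
    ncard_image_of_injective _ Subtype.val_injective
  obtain ⟨htwo, hconn⟩ := h (Subtype.val '' T) (by simp) (hcard ▸ hT)
  refine ⟨?_, ?_⟩
  · rwa [← ncard_image_of_injective Tᶜ Subtype.val_injective, image_val_compl]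
  · let f : G.induce (U \ Subtype.val '' T) →g (G.induce U).induce Tᶜ :=
      { toFun := fun x => ⟨⟨x, x.2.1⟩, fun hx => x.2.2 ⟨_, hx, rfl⟩⟩, map_rel' := id }
    refine hconn.map f fun y => ⟨⟨y.1.1, y.1.2, ?_⟩, rfl⟩
    rintro ⟨t, ht, heq⟩
    exact y.2 (Subtype.ext heq ▸ ht)

theorem IsSemifragment.exists_reachable_mem_cut {V : Type*} {G : SimpleGraph V} {S F : Set V}
    (hF : IsSemifragment G S F) {T : Set V} (hTU : T ⊆ S ∪ F) (hT : (G.induce Tᶜ).Preconnected)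
    (x : ↥((S ∪ F) \ T)) :
    ∃ s : ↥((S ∪ F) \ T), (s : V) ∈ S ∧ (G.induce ((S ∪ F) \ T)).Reachable x s := by
  by_contra! hx
  obtain ⟨-, ⟨w, hw⟩, -, hFedge⟩ := hF
  let A : Set V := {y | ∃ hy : y ∈ (S ∪ F) \ T, (G.induce ((S ∪ F) \ T)).Reachable x ⟨y, hy⟩}
  have hAF : A ⊆ F := fun y ⟨hy, hr⟩ => hy.1.resolve_left fun hyS => hx ⟨y, hy⟩ hyS hr
  have hA : ∀ y ∈ Subtype.val ⁻¹' A, ∀ z, (G.induce Tᶜ).Adj y z → z ∈ Subtype.val ⁻¹' A := by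
    rintro y hyA z hyz
    obtain ⟨hy, hr⟩ := hyA
    have hzU : (z : V) ∈ S ∪ F := by
      by_contra hzU
      exact hFedge y (hAF ⟨hy, hr⟩) z ⟨fun h => hzU (.inl h), fun h => hzU (.inr h)⟩ hyz
    exact ⟨⟨hzU, z.2⟩, hr.trans (Adj.reachable (G := G.induce _) hyz)⟩
  have hwT : w ∈ Tᶜ := fun hwT => (hTU hwT).elim hw.1 hw.2
  exact hw.2 <| hAF <| hT.mem_of_adj_closed hA (a := ⟨x, x.2.2⟩) ⟨x.2, .rfl⟩ ⟨w, hwT⟩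

theorem stmt6_general {V : Type*} [Fintype V] (G : SimpleGraph V) (k : ℕ)
    (hconn : KConn G k) (S F : Set V) (hScard : S.ncard = k)
    (hF : IsSemifragment G S F) :
    KConn ((addClique G S).induce (S ∪ F)) k := by
  refine kConn_induce_of_forall_diff fun T hTU hT => ⟨?_, ?_⟩
  · have hFpos : 0 < F.ncard := (ncard_pos (toFinite F)).mpr hF.1
    have hUcard : (S ∪ F).ncard = S.ncard + F.ncard :=
      ncard_union_eq (disjoint_right.mpr fun _ hxF hxS => hF.2.2.1 hxF hxS)
    have := ncard_sdiff_add_ncard_of_subset hTU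
    omega
  · refine connected_induce_of_forall_reachable_clique (isClique_addClique G S) ?_ fun x => ?_
    · obtain ⟨s, hsS, hsT⟩ := sdiff_nonempty_of_ncard_lt_ncard (hScard ▸ hT)
      exact ⟨s, .inl hsS, hsT⟩
    · obtain ⟨s, hsS, hr⟩ := hF.exists_reachable_mem_cut hTU (hconn T hT).2.preconnected x
      exact ⟨s, hsS, hr.mono (comap_monotone _ (le_addClique G S))⟩

/-- Mader: if S is a minimum vertex-cut of the k-connected graph G and F is a
fragment of G to S, then G⟨S⟩[S ∪ F] is k-connected. -/
theorem stmt6 {V : Type*} [Fintype V] (G : SimpleGraph V) (k : ℕ)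
    (hconn : KConn G k) (S F : Set V) (hScard : S.ncard = k)
    (hScut : ¬ (G.induce Sᶜ).Connected) (hF : IsSemifragment G S F) :
    KConn ((addClique G S).induce (S ∪ F)) k :=
  stmt6_general G k hconn S F hScard hF
end

section
/- Let S be a vertex-cut of G with |S| = k and S₁ a vertex-cut of G with |S₁| = k - 1. Let F be a semifragment of G to S and F₁ a semifragment of G to S₁, and suppose G⟨S⟩ - V(F) and G⟨S⟩ - V(F̄) are k-connected, where F̄ = G - (S ∪ V(F)). If F ∩ F₁ ≠ ∅, then |S(F,F₁)| ≥ k, where S(F,F₁) = (S₁ ∩ F) ∪ (S₁ ∩ S) ∪ (S ∩ F₁). -/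
open SimpleGraph Set

/-! Put `T = S(F,F₁)` and suppose `|T| < k`. Then `T` does not separate `G⟨S⟩[S ∪ F]`, yet no edge of
`G⟨S⟩` leaves `F ∩ F₁` inside `(S ∪ F) \ T`: a vertex of `F` lies outside `S`, so its `G⟨S⟩`-neighbours
are `G`-neighbours, and those of a vertex of `F₁` lie in `S₁ ∪ F₁`. Hence every vertex of `S` lies in
`T`, and `k = |S| ≤ |T|`. -/

section

variable {V : Type*}

theorem addClique_adj_of_notMem {G : SimpleGraph V} {S : Set V} {u w : V} (hu : u ∉ S)
    (h : (addClique G S).Adj u w) : G.Adj u w := by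
  rcases h with h | ⟨-, ⟨huS, -⟩ | ⟨-, huS⟩⟩
  · exact h
  all_goals exact absurd huS hu

theorem IsSemifragment.mem_or_mem_of_adj {G : SimpleGraph V} {S F : Set V}
    (hF : IsSemifragment G S F) {u w : V} (hu : u ∈ F) (h : G.Adj u w) : w ∈ S ∨ w ∈ F := by
  by_contra! hw
  exact hF.2.2.2 u hu w hw h

theorem KConn.exists_adj_of_ncard_lt {W : Type*} {H : SimpleGraph W} {k : ℕ} (hH : KConn H k)
    {X A : Set W} (hX : X.ncard < k) {a b : W} (ha : a ∈ A \ X) (hb : b ∈ Xᶜ \ A) :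
    ∃ u ∈ A \ X, ∃ w ∈ Xᶜ \ A, H.Adj u w := by
  obtain ⟨p⟩ := (hH X hX).2.preconnected ⟨a, ha.2⟩ ⟨b, hb.1⟩
  obtain ⟨d, -, hfst, hsnd⟩ := p.exists_boundary_dart {x : ↥Xᶜ | (x : W) ∈ A} ha.1 hb.2
  exact ⟨d.fst, ⟨hfst, d.fst.2⟩, d.snd, ⟨d.snd.2, hsnd⟩, d.adj⟩

theorem mem_inter_of_addClique_adj {G : SimpleGraph V} {S S₁ F F₁ : Set V} (hFS : F ⊆ Sᶜ)
    (hF₁ : IsSemifragment G S₁ F₁) {u w : V} (hu : u ∈ F ∩ F₁) (hw : w ∈ S ∪ F)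
    (hwT : w ∉ (S₁ ∩ F) ∪ (S₁ ∩ S) ∪ (S ∩ F₁)) (h : (addClique G S).Adj u w) : w ∈ F ∩ F₁ := by
  have hGadj : G.Adj u w := addClique_adj_of_notMem (hFS hu.1) h
  rcases hF₁.mem_or_mem_of_adj hu.2 hGadj with hwS₁ | hwF₁
  · rcases hw with hwS | hwF
    · exact absurd (Or.inl (Or.inr ⟨hwS₁, hwS⟩)) hwT
    · exact absurd (Or.inl (Or.inl ⟨hwS₁, hwF⟩)) hwT
  · rcases hw with hwS | hwF
    · exact absurd (Or.inr ⟨hwS, hwF₁⟩) hwT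
    · exact ⟨hwF, hwF₁⟩

end

theorem stmt8_general {V : Type*} [Fintype V] (G : SimpleGraph V) (k : ℕ)
    (S S₁ F F₁ : Set V) (hS : S.ncard = k)
    (hF : IsSemifragment G S F) (hF₁ : IsSemifragment G S₁ F₁)
    (h2 : KConn ((addClique G S).induce (S ∪ F)) k)
    (hint : (F ∩ F₁).Nonempty) :
    k ≤ ((S₁ ∩ F) ∪ (S₁ ∩ S) ∪ (S ∩ F₁)).ncard := by
  set T := (S₁ ∩ F) ∪ (S₁ ∩ S) ∪ (S ∩ F₁)
  have hFS : F ⊆ Sᶜ := hF.2.2.1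
  by_contra! hT
  suffices S ⊆ T from hT.not_ge (hS ▸ ncard_le_ncard this)
  intro b hbS
  by_contra hbT
  obtain ⟨a, haF, haF₁⟩ := hint
  have haT : a ∉ T := by
    rintro ((⟨haS₁, -⟩ | ⟨haS₁, -⟩) | ⟨haS, -⟩)
    exacts [hF₁.2.2.1 haF₁ haS₁, hF₁.2.2.1 haF₁ haS₁, hFS haF haS]
  have hX : {x : ↥(S ∪ F) | ↑x ∈ T}.ncard < k :=
    (ncard_le_ncard_of_injOn Subtype.val (fun _ hx ↦ hx) Subtype.val_injective.injOn).trans_lt hT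
  obtain ⟨u, ⟨hu, -⟩, w, ⟨hwT, hw⟩, huw⟩ := h2.exists_adj_of_ncard_lt hX
    (a := ⟨a, .inr haF⟩) (b := ⟨b, .inl hbS⟩) (A := {x | ↑x ∈ F ∩ F₁})
    ⟨⟨haF, haF₁⟩, haT⟩ ⟨hbT, fun h ↦ hFS h.1 hbS⟩
  exact hw (mem_inter_of_addClique_adj hFS hF₁ hu w.2 hwT huw)

/-- Lemma 2.2(a): with S, S₁ vertex-cuts of sizes k and k-1, F, F₁
semifragments, and G⟨S⟩ - V(F), G⟨S⟩ - V(F̄) both k-connected: if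
F ∩ F₁ ≠ ∅ then |S(F,F₁)| ≥ k. -/
theorem stmt8 {V : Type*} [Fintype V] (G : SimpleGraph V) (k : ℕ) (hk : 1 ≤ k)
    (S S₁ F F₁ : Set V) (hS : S.ncard = k) (hS₁ : S₁.ncard = k - 1)
    (hScut : ¬ (G.induce Sᶜ).Connected) (hS₁cut : ¬ (G.induce S₁ᶜ).Connected)
    (hF : IsSemifragment G S F) (hF₁ : IsSemifragment G S₁ F₁)
    (h1 : KConn ((addClique G S).induce Fᶜ) k)
    (h2 : KConn ((addClique G S).induce (S ∪ F)) k)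
    (hint : (F ∩ F₁).Nonempty) :
    k ≤ ((S₁ ∩ F) ∪ (S₁ ∩ S) ∪ (S ∩ F₁)).ncard :=
  stmt8_general G k S S₁ F F₁ hS hF hF₁ h2 hint
end

section
/- Let G = G[X,Y] be a bipartite graph with κ(G) = k and minimum degree at least k + ⌈m/2⌉, where k, m are positive integers. Let S be a minimum vertex-cut of G and F a fragment of G to S. If there exists a path P of order at most m contained in G - (S ∪ V(F)) such that G⟨S⟩ - V(F ∪ P) is k-connected, then G - V(P) is k-connected. -/
open SimpleGraph Set

namespace Stmt10Aux

variable {V : Type*}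

/-- one step of adjacency inside a set `A` -/
def stp (G : SimpleGraph V) (A : Set V) (u v : V) : Prop :=
  G.Adj u v ∧ u ∈ A ∧ v ∈ A

/-- connectivity relation within a set `A` -/
def crel (G : SimpleGraph V) (A : Set V) : V → V → Prop :=
  Relation.ReflTransGen (stp G A)

lemma crel_symm {G : SimpleGraph V} {A : Set V} {x y : V} (h : crel G A x y) :
    crel G A y x :=
  @Std.Symm.symm _ _ (@Relation.ReflTransGen.stdSymm _ _ ⟨fun _ _ h => ⟨h.1.symm, h.2.2, h.2.1⟩⟩) _ _ h

lemma crel_of_walk {G : SimpleGraph V} {B : Set V} {P Q : ↥B}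
    (w : (G.induce B).Walk P Q) : crel G B P.val Q.val := by
  induction w with
  | nil => exact Relation.ReflTransGen.refl
  | @cons u v w h q ih =>
      exact Relation.ReflTransGen.head ⟨h, u.prop, v.prop⟩ ih

lemma crel_of_connected {G : SimpleGraph V} {B : Set V}
    (hc : (G.induce B).Connected) {x y : V} (hx : x ∈ B) (hy : y ∈ B) :
    crel G B x y := by
  obtain ⟨w⟩ := hc.preconnected ⟨x, hx⟩ ⟨y, hy⟩
  exact crel_of_walk w

lemma image_val_compl {B : Set V} (C : Set ↥B) :
    (Subtype.val '' (Cᶜ : Set ↥B)) = B \ (Subtype.val '' C) := by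
  ext v
  constructor
  · rintro ⟨u, hu, rfl⟩
    exact ⟨u.prop, fun ⟨w, hw, hwv⟩ => hu (Subtype.val_injective hwv ▸ hw)⟩
  · rintro ⟨hvB, hnot⟩
    exact ⟨⟨v, hvB⟩, fun hc => hnot ⟨⟨v, hvB⟩, hc, rfl⟩, rfl⟩

lemma crel_val {G : SimpleGraph V} {B : Set V} {C : Set ↥B} {P Q : ↥B}
    (h : crel (G.induce B) C P Q) : crel G (Subtype.val '' C) P.val Q.val := by
  induction h with
  | refl => exact Relation.ReflTransGen.refl
  | tail _ h ih =>
      exact Relation.ReflTransGen.tail ih ⟨h.1, ⟨_, h.2.1, rfl⟩, ⟨_, h.2.2, rfl⟩⟩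

lemma crel_of_connected₂ {G : SimpleGraph V} {B : Set V} {C : Set ↥B}
    (hc : ((G.induce B).induce Cᶜ).Connected) {x y : V}
    (hx : x ∈ B \ (Subtype.val '' C)) (hy : y ∈ B \ (Subtype.val '' C)) :
    crel G (B \ (Subtype.val '' C)) x y := by
  have hx' : (⟨x, hx.1⟩ : ↥B) ∈ (Cᶜ : Set ↥B) := fun h => hx.2 ⟨_, h, rfl⟩
  have hy' : (⟨y, hy.1⟩ : ↥B) ∈ (Cᶜ : Set ↥B) := fun h => hy.2 ⟨_, h, rfl⟩
  have h2 := crel_val (crel_of_connected hc hx' hy')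
  rwa [image_val_compl] at h2

/-- lift a vertex into the doubly-induced graph -/
def liftPt {B : Set V} (C : Set ↥B) (x : V) (hx : x ∈ B \ (Subtype.val '' C)) :
    ↥(Cᶜ : Set ↥B) :=
  ⟨⟨x, hx.1⟩, fun hmem => hx.2 ⟨_, hmem, rfl⟩⟩

lemma reach_of_crel {G : SimpleGraph V} {B : Set V} {C : Set ↥B} {x y : V}
    (h : crel G (B \ (Subtype.val '' C)) x y) (hy : y ∈ B \ (Subtype.val '' C)) :
    ∀ hx : x ∈ B \ (Subtype.val '' C),
      ((G.induce B).induce Cᶜ).Reachable (liftPt C x hx) (liftPt C y hy) := by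
  induction h using Relation.ReflTransGen.head_induction_on with
  | refl => intro hx; exact Reachable.refl _
  | head h' hrest ih =>
      intro hx
      have hc := h'.2.2
      have hadj : ((G.induce B).induce Cᶜ).Adj (liftPt C _ hx) (liftPt C _ hc) := h'.1
      exact hadj.reachable.trans (ih hc)

lemma connected₂_of_crel {G : SimpleGraph V} {B : Set V} {C : Set ↥B}
    (hne : (B \ (Subtype.val '' C)).Nonempty)
    (h : ∀ x y, x ∈ B \ (Subtype.val '' C) → y ∈ B \ (Subtype.val '' C) →
      crel G (B \ (Subtype.val '' C)) x y) :
    ((G.induce B).induce Cᶜ).Connected := by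
  obtain ⟨z, hz⟩ := hne
  rw [SimpleGraph.connected_iff]
  refine ⟨?_, ⟨liftPt C z hz⟩⟩
  intro u v
  have hu : u.val.val ∈ B \ (Subtype.val '' C) :=
    ⟨u.val.prop, fun hmem => by
      obtain ⟨w, hw, hwv⟩ := hmem
      exact u.prop (Subtype.val_injective hwv ▸ hw)⟩
  have hv : v.val.val ∈ B \ (Subtype.val '' C) :=
    ⟨v.val.prop, fun hmem => by
      obtain ⟨w, hw, hwv⟩ := hmem
      exact v.prop (Subtype.val_injective hwv ▸ hw)⟩
  exact reach_of_crel (h _ _ hu hv) hv hu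

lemma diff_nonempty_of_ncard {α : Type*} (X Y : Set α)
    (h : (X ∩ Y).ncard < X.ncard) : (X \ Y).Nonempty := by
  by_contra hne
  rw [Set.not_nonempty_iff_eq_empty, Set.diff_eq_empty] at hne
  rw [Set.inter_eq_left.mpr hne] at h
  exact lt_irrefl _ h

lemma nbr_chain_bound {V : Type*} [Fintype V] (G : SimpleGraph V)
    (htri : ∀ {x y z : V}, G.Adj x y → G.Adj x z → G.Adj y z → False) :
    ∀ (ℓ : List V), List.Chain' G.Adj ℓ → ∀ v : V,
      ((G.neighborSet v) ∩ {x | x ∈ ℓ}).ncard ≤ (ℓ.length + 1) / 2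
  | [], _, v => by simp
  | [x], _, v => by
      have hsub : (G.neighborSet v) ∩ {y | y ∈ [x]} ⊆ {x} := by
        rintro z ⟨_, hz⟩; simpa using hz
      have h1 := Set.ncard_le_ncard hsub (Set.toFinite _)
      have h2 : ({x} : Set V).ncard = 1 := Set.ncard_singleton x
      simp only [List.length_cons, List.length_nil]
      omega
  | x :: y :: t, hch, v => by
      obtain ⟨hxy, hch'⟩ := List.isChain_cons_cons.mp hch
      have hcht : List.Chain' G.Adj t := hch'.tail
      by_cases hvx : G.Adj v x
      · have hvy : ¬ G.Adj v y := fun h => htri hvx h hxy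
        have hsub : (G.neighborSet v) ∩ {z | z ∈ x :: y :: t} ⊆
            insert x ((G.neighborSet v) ∩ {z | z ∈ t}) := by
          rintro z ⟨hz1, hz2⟩
          rcases List.mem_cons.mp hz2 with rfl | hz3
          · exact Set.mem_insert _ _
          · rcases List.mem_cons.mp hz3 with rfl | h
            · exact absurd hz1 hvy
            · exact Set.mem_insert_of_mem _ ⟨hz1, h⟩
        have h1 := Set.ncard_le_ncard hsub (Set.toFinite _)
        have h2 := Set.ncard_insert_le x ((G.neighborSet v) ∩ {z | z ∈ t})
        have h3 := nbr_chain_bound G htri t hcht v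
        simp only [List.length_cons] at h3 ⊢
        omega
      · have hsub : (G.neighborSet v) ∩ {z | z ∈ x :: y :: t} ⊆
            (G.neighborSet v) ∩ {z | z ∈ y :: t} := by
          rintro z ⟨hz1, hz2⟩
          rcases List.mem_cons.mp hz2 with rfl | h
          · exact absurd hz1 hvx
          · exact ⟨hz1, h⟩
        have h1 := Set.ncard_le_ncard hsub (Set.toFinite _)
        have h3 := nbr_chain_bound G htri (y :: t) hch' v
        simp only [List.length_cons] at h3 ⊢
        omega

end Stmt10Aux

open Stmt10Aux

/-- Lemma 2.3: G bipartite with κ(G) = k and δ(G) ≥ k + ⌈m/2⌉, S a minimum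
vertex-cut, F a fragment of G to S. If a path P of order at most m lies in
G - (S ∪ V(F)) and G⟨S⟩ - V(F ∪ P) is k-connected, then G - V(P) is
k-connected. -/
theorem stmt10 {V : Type*} [Fintype V] (G : SimpleGraph V) (k m : ℕ)
    (hk : 1 ≤ k) (hm : 1 ≤ m) (hbip : G.Colorable 2)
    (hconn : KConn G k)
    (hδ : ∀ v : V, k + (m + 1) / 2 ≤ (G.neighborSet v).ncard)
    (S F : Set V) (hS : S.ncard = k) (hScut : ¬ (G.induce Sᶜ).Connected)
    (hF : IsSemifragment G S F)
    {a b : V} (p : G.Walk a b) (hp : p.IsPath)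
    (hPout : ∀ x ∈ p.support, x ∈ (S ∪ F)ᶜ)
    (hPord : p.support.length ≤ m)
    (hcut : KConn ((addClique G S).induce (F ∪ {x | x ∈ p.support})ᶜ) k) :
    KConn (G.induce {x | x ∈ p.support}ᶜ) k := by
  classical
  obtain ⟨col⟩ := hbip
  set W : Set V := {x | x ∈ p.support} with hWdef
  intro T₀ hT₀
  set T : Set V := Subtype.val '' T₀ with hTdef
  have hTcard : T.ncard < k := by
    rw [hTdef, Set.ncard_image_of_injective _ Subtype.val_injective]; exact hT₀
  set R : Set V := (S ∪ F ∪ W)ᶜ with hRdef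
  set A : Set V := Wᶜ \ T with hAdef
  have hh : 1 ≤ (m + 1) / 2 := by omega
  -- basic disjointness facts
  have hWS : ∀ x ∈ W, x ∉ S := fun x hx hs => hPout x hx (Set.mem_union_left _ hs)
  have hWF : ∀ x ∈ W, x ∉ F := fun x hx hs => hPout x hx (Set.mem_union_right _ hs)
  have hFS : ∀ x ∈ F, x ∉ S := fun x hx => hF.2.2.1 hx
  have hFW : ∀ x ∈ F, x ∉ W := fun x hx hw => hWF x hw hx
  have hRS : ∀ x ∈ R, x ∉ S := fun x hx hs => hx (Or.inl (Or.inl hs))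
  have hRF : ∀ x ∈ R, x ∉ F := fun x hx hs => hx (Or.inl (Or.inr hs))
  have hRW : ∀ x ∈ R, x ∉ W := fun x hx hw => hx (Or.inr hw)
  have hpart : ∀ v : V, v ∈ S ∨ v ∈ F ∨ v ∈ W ∨ v ∈ R := by
    intro v
    by_cases h1 : v ∈ S
    · exact Or.inl h1
    by_cases h2 : v ∈ F
    · exact Or.inr (Or.inl h2)
    by_cases h3 : v ∈ W
    · exact Or.inr (Or.inr (Or.inl h3))
    · refine Or.inr (Or.inr (Or.inr ?_))
      intro hmem
      rcases hmem with (h | h) | h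
      · exact h1 h
      · exact h2 h
      · exact h3 h
  have hnoFR : ∀ u ∈ F, ∀ t, G.Adj u t → t ∈ F ∨ t ∈ S := by
    intro u hu t hadj
    by_contra hc
    push_neg at hc
    exact hF.2.2.2 u hu t ⟨fun hs => hc.2 hs, hc.1⟩ hadj
  have htri : ∀ {x y z : V}, G.Adj x y → G.Adj x z → G.Adj y z → False := by
    intro x y z h1 h2 h3
    have e1 : col x ≠ col y := col.valid h1
    have e2 : col x ≠ col z := col.valid h2
    have e3 : col y ≠ col z := col.valid h3
    exact (by decide : ∀ a b c : Fin 2, a ≠ b → a ≠ c → b ≠ c → False) _ _ _ e1 e2 e3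
  have hpathW : ∀ v : V, ((G.neighborSet v) ∩ W).ncard ≤ (m + 1) / 2 := by
    intro v
    have h1 := nbr_chain_bound G (fun h1 h2 h3 => htri h1 h2 h3) p.support
      p.isChain_adj_support v
    have h2 : p.support.length ≤ m := hPord
    have h3 : ((G.neighborSet v) ∩ W).ncard ≤ (p.support.length + 1) / 2 := h1
    omega
  have cnt : ∀ (v : V) (E : Set V), G.neighborSet v ⊆ W ∪ E → k ≤ E.ncard := by
    intro v E hsub
    have h1 : G.neighborSet v ⊆ (G.neighborSet v ∩ W) ∪ E := by
      intro z hz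
      rcases hsub hz with h | h
      · exact Or.inl ⟨hz, h⟩
      · exact Or.inr h
    have h2 := Set.ncard_le_ncard h1 (Set.toFinite _)
    have h3 := Set.ncard_union_le (G.neighborSet v ∩ W) E
    have h4 := hpathW v
    have h5 := hδ v
    omega
  have hmemA : ∀ {x : V}, x ∈ A ↔ (x ∉ W ∧ x ∉ T) := fun {x} => Iff.rfl
  -- the component sets
  set D : V → Set V := fun u => {z | crel G A u z ∧ z ∈ A} with hDdef
  have hclose : ∀ u z t, z ∈ D u → G.Adj z t → t ∈ A → t ∈ D u :=
    fun u z t hz hadj ht => ⟨hz.1.tail ⟨hadj, hz.2, ht⟩, ht⟩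
  have hDnbrs : ∀ u z, z ∈ D u → ∀ t, G.Adj z t → t ∈ W ∨ t ∈ T ∨ t ∈ D u := by
    intro u z hz t hadj
    by_cases h1 : t ∈ W
    · exact Or.inl h1
    by_cases h2 : t ∈ T
    · exact Or.inr (Or.inl h2)
    · exact Or.inr (Or.inr (hclose u z t hz hadj (hmemA.mpr ⟨h1, h2⟩)))
  -- Lemma A: no component inside S
  have lemA : ∀ u, u ∈ A → ¬ (D u ⊆ S) := by
    intro u huA hDS
    have key : ∀ z ∈ D u, k ≤ (T ∩ {t | col t ≠ col z}).ncard
        + (D u ∩ {t | col t ≠ col z}).ncard := by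
      intro z hz
      have hsub : G.neighborSet z ⊆ W ∪ ((T ∩ {t | col t ≠ col z})
          ∪ (D u ∩ {t | col t ≠ col z})) := by
        intro t ht
        have hadj : G.Adj z t := ht
        have hcol : col t ≠ col z := (col.valid hadj).symm
        rcases hDnbrs u z hz t hadj with h | h | h
        · exact Or.inl h
        · exact Or.inr (Or.inl ⟨h, hcol⟩)
        · exact Or.inr (Or.inr ⟨h, hcol⟩)
      have h1 := cnt z _ hsub
      have h2 := Set.ncard_union_le (T ∩ {t | col t ≠ col z}) (D u ∩ {t | col t ≠ col z})
      omega
    have huD : u ∈ D u := ⟨Relation.ReflTransGen.refl, huA⟩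
    have h1 := key u huD
    have hTk : (T ∩ {t | col t ≠ col u}).ncard ≤ T.ncard :=
      Set.ncard_le_ncard Set.inter_subset_left (Set.toFinite _)
    have hne : (D u ∩ {t | col t ≠ col u}).Nonempty := by
      rw [← Set.ncard_pos (Set.toFinite _)]
      omega
    obtain ⟨v, hvD, hvcol⟩ := hne
    have h2 := key v hvD
    have hdisj : ∀ (X : Set V), (X ∩ {t | col t ≠ col u}).ncard
        + (X ∩ {t | col t ≠ col v}).ncard ≤ X.ncard := by
      intro X
      have hd : Disjoint (X ∩ {t | col t ≠ col u}) (X ∩ {t | col t ≠ col v}) := by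
        rw [Set.disjoint_left]
        rintro t ⟨_, ht1⟩ ⟨_, ht2⟩
        exact (by decide : ∀ a b c : Fin 2, c ≠ a → c ≠ b → b ≠ a → False)
          (col u) (col v) (col t) ht1 ht2 hvcol
      have e1 := (Set.ncard_union_eq hd (Set.toFinite _) (Set.toFinite _)).symm
      have e2 : (X ∩ {t | col t ≠ col u}) ∪ (X ∩ {t | col t ≠ col v}) ⊆ X :=
        Set.union_subset Set.inter_subset_left Set.inter_subset_left
      have e3 := Set.ncard_le_ncard e2 (Set.toFinite _)
      omega
    have hTsum := hdisj T
    have hDsum := hdisj (D u)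
    have hDk : (D u).ncard ≤ k := by
      rw [← hS]; exact Set.ncard_le_ncard hDS (Set.toFinite _)
    omega
  -- Lemma B: R \ T is nonempty
  have hWRnbrs : ∀ v, v ∈ W ∪ R → ∀ t, G.Adj v t → t ∈ S ∨ t ∈ W ∨ t ∈ R := by
    intro v hv t hadj
    have hvSF : v ∉ S ∧ v ∉ F := by
      rcases hv with h | h
      · exact ⟨hWS v h, hWF v h⟩
      · exact ⟨hRS v h, hRF v h⟩
    have htF : t ∉ F := fun htf => hF.2.2.2 t htf v ⟨hvSF.1, hvSF.2⟩ hadj.symm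
    rcases hpart t with h | h | h | h
    · exact Or.inl h
    · exact absurd h htF
    · exact Or.inr (Or.inl h)
    · exact Or.inr (Or.inr h)
  have haW : (a : V) ∈ W := p.start_mem_support
  have hRT : (R \ T).Nonempty := by
    by_cases hcase : ∃ v ∈ W ∪ R, col v ≠ col a
    · obtain ⟨v, hvWR, hvcol⟩ := hcase
      have key2 : ∀ u, u ∈ W ∪ R → k ≤ (S ∩ {t | col t ≠ col u}).ncard
          + (R ∩ {t | col t ≠ col u}).ncard := by
        intro u hu
        have hsub : G.neighborSet u ⊆ W ∪ ((S ∩ {t | col t ≠ col u})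
            ∪ (R ∩ {t | col t ≠ col u})) := by
          intro t ht
          have hadj : G.Adj u t := ht
          have hcol : col t ≠ col u := (col.valid hadj).symm
          rcases hWRnbrs u hu t hadj with h | h | h
          · exact Or.inr (Or.inl ⟨h, hcol⟩)
          · exact Or.inl h
          · exact Or.inr (Or.inr ⟨h, hcol⟩)
        have h1 := cnt u _ hsub
        have h2 := Set.ncard_union_le (S ∩ {t | col t ≠ col u}) (R ∩ {t | col t ≠ col u})
        omega
      have h1 := key2 a (Or.inl haW)
      have h2 := key2 v hvWR
      have hdisj : ∀ (X : Set V), (X ∩ {t | col t ≠ col a}).ncard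
          + (X ∩ {t | col t ≠ col v}).ncard ≤ X.ncard := by
        intro X
        have hd : Disjoint (X ∩ {t | col t ≠ col a}) (X ∩ {t | col t ≠ col v}) := by
          rw [Set.disjoint_left]
          rintro t ⟨_, ht1⟩ ⟨_, ht2⟩
          exact (by decide : ∀ x y c : Fin 2, c ≠ x → c ≠ y → y ≠ x → False)
            (col a) (col v) (col t) ht1 ht2 hvcol
        have e1 := (Set.ncard_union_eq hd (Set.toFinite _) (Set.toFinite _)).symm
        have e2 : (X ∩ {t | col t ≠ col a}) ∪ (X ∩ {t | col t ≠ col v}) ⊆ X :=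
          Set.union_subset Set.inter_subset_left Set.inter_subset_left
        have e3 := Set.ncard_le_ncard e2 (Set.toFinite _)
        omega
      have hSsum := hdisj S
      have hRsum := hdisj R
      have hRk : k ≤ R.ncard := by omega
      apply diff_nonempty_of_ncard
      have h3 : (R ∩ T).ncard ≤ T.ncard :=
        Set.ncard_le_ncard Set.inter_subset_right (Set.toFinite _)
      omega
    · push_neg at hcase
      exfalso
      have hsub : G.neighborSet a ⊆ S ∩ {t | col t ≠ col a} := by
        intro t ht
        have hadj : G.Adj a t := ht
        have hcol : col t ≠ col a := (col.valid hadj).symm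
        rcases hWRnbrs a (Or.inl haW) t hadj with h | h | h
        · exact ⟨h, hcol⟩
        · exact absurd (hcase t (Or.inl h)) hcol
        · exact absurd (hcase t (Or.inr h)) hcol
      have h1 := Set.ncard_le_ncard hsub (Set.toFinite _)
      have h2 : (S ∩ {t | col t ≠ col a}).ncard ≤ S.ncard :=
        Set.ncard_le_ncard Set.inter_subset_left (Set.toFinite _)
      have h3 := hδ a
      omega
  -- Lemma C : F \ T is nonempty
  have hFT : (F \ T).Nonempty := by
    obtain ⟨f, hfF⟩ := hF.1
    by_cases hcase : ∃ g ∈ F, col g ≠ col f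
    · obtain ⟨g, hgF, hgcol⟩ := hcase
      have key3 : ∀ u ∈ F, k + (m + 1) / 2 ≤ (F ∩ {t | col t ≠ col u}).ncard
          + (S ∩ {t | col t ≠ col u}).ncard := by
        intro u hu
        have hsub : G.neighborSet u ⊆ (F ∩ {t | col t ≠ col u})
            ∪ (S ∩ {t | col t ≠ col u}) := by
          intro t ht
          have hadj : G.Adj u t := ht
          have hcol : col t ≠ col u := (col.valid hadj).symm
          rcases hnoFR u hu t hadj with h | h
          · exact Or.inl ⟨h, hcol⟩
          · exact Or.inr ⟨h, hcol⟩
        have h1 := Set.ncard_le_ncard hsub (Set.toFinite _)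
        have h2 := Set.ncard_union_le (F ∩ {t | col t ≠ col u}) (S ∩ {t | col t ≠ col u})
        have h3 := hδ u
        omega
      have h1 := key3 f hfF
      have h2 := key3 g hgF
      have hdisj : ∀ (X : Set V), (X ∩ {t | col t ≠ col f}).ncard
          + (X ∩ {t | col t ≠ col g}).ncard ≤ X.ncard := by
        intro X
        have hd : Disjoint (X ∩ {t | col t ≠ col f}) (X ∩ {t | col t ≠ col g}) := by
          rw [Set.disjoint_left]
          rintro t ⟨_, ht1⟩ ⟨_, ht2⟩
          exact (by decide : ∀ x y c : Fin 2, c ≠ x → c ≠ y → y ≠ x → False)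
            (col f) (col g) (col t) ht1 ht2 hgcol
        have e1 := (Set.ncard_union_eq hd (Set.toFinite _) (Set.toFinite _)).symm
        have e2 : (X ∩ {t | col t ≠ col f}) ∪ (X ∩ {t | col t ≠ col g}) ⊆ X :=
          Set.union_subset Set.inter_subset_left Set.inter_subset_left
        have e3 := Set.ncard_le_ncard e2 (Set.toFinite _)
        omega
      have hFsum := hdisj F
      have hSsum := hdisj S
      have hSk : S.ncard = k := hS
      apply diff_nonempty_of_ncard
      have h3 : (F ∩ T).ncard ≤ T.ncard :=
        Set.ncard_le_ncard Set.inter_subset_right (Set.toFinite _)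
      omega
    · push_neg at hcase
      exfalso
      have hsub : G.neighborSet f ⊆ S ∩ {t | col t ≠ col f} := by
        intro t ht
        have hadj : G.Adj f t := ht
        have hcol : col t ≠ col f := (col.valid hadj).symm
        rcases hnoFR f hfF t hadj with h | h
        · exact absurd (hcase t h) hcol
        · exact ⟨h, hcol⟩
      have h1 := Set.ncard_le_ncard hsub (Set.toFinite _)
      have h2 : (S ∩ {t | col t ≠ col f}).ncard ≤ S.ncard :=
        Set.ncard_le_ncard Set.inter_subset_left (Set.toFinite _)
      have h3 := hδ f
      omega
  -- Lemma D
  have lemD : ∀ u z, z ∈ D u → z ∈ F →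
      k ≤ (T ∩ (F ∪ S)).ncard + (D u ∩ S).ncard := by
    intro u z hzD hzF
    by_contra hlt
    push_neg at hlt
    set U : Set V := (T ∩ (F ∪ S)) ∪ (D u ∩ S) with hUdef
    have hUcard : U.ncard < k := lt_of_le_of_lt (Set.ncard_union_le _ _) hlt
    obtain ⟨s', hs'S, hs'U⟩ : (S \ U).Nonempty := by
      apply diff_nonempty_of_ncard
      have h1 : (S ∩ U).ncard ≤ U.ncard :=
        Set.ncard_le_ncard Set.inter_subset_right (Set.toFinite _)
      omega
    have hconn' := (hconn U hUcard).2
    have hzU : z ∈ Uᶜ := by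
      intro hzU
      rcases hzU with ⟨hzT, _⟩ | ⟨_, hzS⟩
      · exact hzD.2.2 hzT
      · exact hFS z hzF hzS
    have hcr := crel_of_connected hconn' hzU hs'U
    have hinv : ∀ y, crel G Uᶜ z y → y ∈ D u ∧ y ∈ F := by
      intro y hy
      induction hy with
      | refl => exact ⟨hzD, hzF⟩
      | @tail c d hprev hstep ih =>
          obtain ⟨hbD, hbF⟩ := ih
          obtain ⟨hadj, hbU, hdU⟩ := hstep
          have hdFS : d ∈ F ∨ d ∈ S := hnoFR c hbF d hadj
          have hdW : d ∉ W := by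
            rcases hdFS with h | h
            · exact hFW d h
            · exact fun hw => hWS d hw h
          have hdT : d ∉ T := fun ht => hdU (Or.inl ⟨ht, hdFS.imp id id⟩)
          have hdA : d ∈ A := hmemA.mpr ⟨hdW, hdT⟩
          have hdD : d ∈ D u := hclose u c d hbD hadj hdA
          rcases hdFS with h | h
          · exact ⟨hdD, h⟩
          · exact absurd (Or.inr ⟨hdD, h⟩ : d ∈ U) hdU
    exact hFS s' (hinv s' hcr).2 hs'S
  -- Lemma E
  have lemE : ∀ u z, z ∈ D u → z ∈ R →
      k ≤ (T ∩ (S ∪ R)).ncard + (D u ∩ S).ncard := by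
    intro u z hzD hzR
    by_contra hlt
    push_neg at hlt
    set U : Set V := (T ∩ (S ∪ R)) ∪ (D u ∩ S) with hUdef
    have hUcard : U.ncard < k := lt_of_le_of_lt (Set.ncard_union_le _ _) hlt
    obtain ⟨s', hs'S, hs'U⟩ : (S \ U).Nonempty := by
      apply diff_nonempty_of_ncard
      have h1 : (S ∩ U).ncard ≤ U.ncard :=
        Set.ncard_le_ncard Set.inter_subset_right (Set.toFinite _)
      omega
    have hUsub : U ⊆ (F ∪ W)ᶜ := by
      intro x hx
      have hxSR : x ∈ S ∪ R := by
        rcases hx with ⟨_, h⟩ | ⟨_, h⟩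
        · exact h
        · exact Or.inl h
      intro hmem
      rcases hxSR with h | h
      · rcases hmem with h2 | h2
        · exact hFS x h2 h
        · exact hWS x h2 h
      · rcases hmem with h2 | h2
        · exact hRF x h h2
        · exact hRW x h h2
    set U₂ : Set ↥((F ∪ W)ᶜ) := Subtype.val ⁻¹' U with hU₂def
    have him : Subtype.val '' U₂ = U := by
      rw [hU₂def, Subtype.image_preimage_coe]
      exact Set.inter_eq_self_of_subset_right hUsub
    have hU₂card : U₂.ncard < k := by
      have h1 : (Subtype.val '' U₂).ncard = U₂.ncard :=
        Set.ncard_image_of_injective _ Subtype.val_injective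
      rw [him] at h1
      omega
    have hconn₂ := (hcut U₂ hU₂card).2
    have hzmem : z ∈ (F ∪ W)ᶜ \ (Subtype.val '' U₂) := by
      rw [him]
      refine ⟨?_, ?_⟩
      · intro hmem
        rcases hmem with h | h
        · exact hRF z hzR h
        · exact hRW z hzR h
      · intro hzU
        rcases hzU with ⟨hzT, _⟩ | ⟨_, hzS⟩
        · exact hzD.2.2 hzT
        · exact hRS z hzR hzS
    have hs'mem : s' ∈ (F ∪ W)ᶜ \ (Subtype.val '' U₂) := by
      rw [him]
      refine ⟨?_, hs'U⟩
      intro hmem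
      rcases hmem with h | h
      · exact hFS s' h hs'S
      · exact hWS s' h hs'S
    have hcr := crel_of_connected₂ hconn₂ hzmem hs'mem
    rw [him] at hcr
    have hinv : ∀ y, crel (addClique G S) ((F ∪ W)ᶜ \ U) z y → y ∈ D u ∧ y ∈ R := by
      intro y hy
      induction hy with
      | refl => exact ⟨hzD, hzR⟩
      | @tail c d hprev hstep ih =>
          obtain ⟨hbD, hbR⟩ := ih
          obtain ⟨hadj, hbM, hdM⟩ := hstep
          have hadj' : G.Adj c d := by
            rcases (sup_adj _ _ _ _).mp hadj with h | h
            · exact h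
            · exfalso
              rcases (SimpleGraph.fromRel_adj _ _ _).mp h with ⟨_, hrel⟩
              rcases hrel with ⟨hcS, _⟩ | ⟨_, hcS⟩ <;> exact hRS c hbR hcS
          have hdFW := hdM.1
          have hdW : d ∉ W := fun hw => hdFW (Or.inr hw)
          have hdF : d ∉ F := fun hf => hdFW (Or.inl hf)
          have hdSR : d ∈ S ∨ d ∈ R := by
            rcases hpart d with h | h | h | h
            · exact Or.inl h
            · exact absurd h hdF
            · exact absurd h hdW
            · exact Or.inr h
          have hdT : d ∉ T := fun ht => hdM.2 (Or.inl ⟨ht, hdSR.imp id id⟩)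
          have hdA : d ∈ A := hmemA.mpr ⟨hdW, hdT⟩
          have hdD : d ∈ D u := hclose u c d hbD hadj' hdA
          rcases hdSR with h | h
          · exact absurd (Or.inr ⟨hdD, h⟩ : d ∈ U) hdM.2
          · exact ⟨hdD, h⟩
    exact hRS s' (hinv s' hcr).2 hs'S
  -- summing lemma
  have hsumc : ∀ u v, ¬ crel G A u v →
      k ≤ (T ∩ (F ∪ S)).ncard + (D u ∩ S).ncard →
      k ≤ (T ∩ (S ∪ R)).ncard + (D v ∩ S).ncard → False := by
    intro u v hnrel hdu hdv
    have hdisjDD : Disjoint (D u ∩ S) (D v ∩ S) := by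
      rw [Set.disjoint_left]
      rintro t ⟨h1, _⟩ ⟨h2, _⟩
      exact hnrel (h1.1.trans (crel_symm h2.1))
    have hdisjT : ∀ u' : V, Disjoint (D u' ∩ S) (T ∩ S) := by
      intro u'
      rw [Set.disjoint_left]
      rintro t ⟨h1, _⟩ ⟨h2, _⟩
      exact h1.2.2 h2
    have h1 : (D u ∩ S).ncard + (D v ∩ S).ncard + (T ∩ S).ncard ≤ k := by
      have hd2 : Disjoint ((D u ∩ S) ∪ (D v ∩ S)) (T ∩ S) :=
        Set.disjoint_union_left.mpr ⟨hdisjT u, hdisjT v⟩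
      have e1 := Set.ncard_union_eq hd2 (Set.toFinite _) (Set.toFinite _)
      have e2 := Set.ncard_union_eq hdisjDD (Set.toFinite _) (Set.toFinite _)
      have e3 : ((D u ∩ S) ∪ (D v ∩ S)) ∪ (T ∩ S) ⊆ S := by
        intro t ht
        rcases ht with (⟨_, h⟩ | ⟨_, h⟩) | ⟨_, h⟩ <;> exact h
      have e4 := Set.ncard_le_ncard e3 (Set.toFinite _)
      rw [hS] at e4
      omega
    have hTFS : (T ∩ (F ∪ S)).ncard = (T ∩ F).ncard + (T ∩ S).ncard := by
      rw [Set.inter_union_distrib_left]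
      apply Set.ncard_union_eq _ (Set.toFinite _) (Set.toFinite _)
      rw [Set.disjoint_left]
      rintro t ⟨_, h1⟩ ⟨_, h2⟩
      exact hFS t h1 h2
    have hTSR : (T ∩ (S ∪ R)).ncard = (T ∩ S).ncard + (T ∩ R).ncard := by
      rw [Set.inter_union_distrib_left]
      apply Set.ncard_union_eq _ (Set.toFinite _) (Set.toFinite _)
      rw [Set.disjoint_left]
      rintro t ⟨_, h1⟩ ⟨_, h2⟩
      exact hRS t h2 h1
    have hTtot : (T ∩ F).ncard + (T ∩ S).ncard + (T ∩ R).ncard ≤ T.ncard := by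
      have hd1 : Disjoint (T ∩ F) (T ∩ S) := by
        rw [Set.disjoint_left]
        rintro t ⟨_, h1⟩ ⟨_, h2⟩
        exact hFS t h1 h2
      have hd2 : Disjoint ((T ∩ F) ∪ (T ∩ S)) (T ∩ R) := by
        rw [Set.disjoint_left]
        rintro t ht ⟨_, h2⟩
        rcases ht with ⟨_, h1⟩ | ⟨_, h1⟩
        · exact hRF t h2 h1
        · exact hRS t h2 h1
      have e1 := Set.ncard_union_eq hd1 (Set.toFinite _) (Set.toFinite _)
      have e2 := Set.ncard_union_eq hd2 (Set.toFinite _) (Set.toFinite _)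
      have e3 : ((T ∩ F) ∪ (T ∩ S)) ∪ (T ∩ R) ⊆ T := by
        intro t ht
        rcases ht with (⟨h, _⟩ | ⟨h, _⟩) | ⟨h, _⟩ <;> exact h
      have e4 := Set.ncard_le_ncard e3 (Set.toFinite _)
      omega
    omega
  -- the two distinguished vertices
  obtain ⟨f₀, hf₀F, hf₀T⟩ := hFT
  have hf₀A : f₀ ∈ A := hmemA.mpr ⟨hFW f₀ hf₀F, hf₀T⟩
  obtain ⟨r₀, hr₀R, hr₀T⟩ := hRT
  have hr₀A : r₀ ∈ A := hmemA.mpr ⟨hRW r₀ hr₀R, hr₀T⟩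
  have hfD : f₀ ∈ D f₀ := ⟨Relation.ReflTransGen.refl, hf₀A⟩
  have hrD : r₀ ∈ D r₀ := ⟨Relation.ReflTransGen.refl, hr₀A⟩
  -- main claim
  have main : ∀ x ∈ A, ∀ y ∈ A, crel G A x y := by
    by_contra hmain
    push_neg at hmain
    obtain ⟨x, hxA, y, hyA, hxy⟩ := hmain
    by_cases hfr : crel G A f₀ r₀
    · have key : ∀ z, z ∈ A → ¬ crel G A f₀ z → False := by
        intro z hzA hnz
        obtain ⟨w, hwD, hwS⟩ : ∃ w, w ∈ D z ∧ w ∉ S := by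
          by_contra hcon
          push_neg at hcon
          exact lemA z hzA (fun t ht => hcon t ht)
        have hwA : w ∈ A := hwD.2
        rcases hpart w with h | h | h | h
        · exact hwS h
        · exact hsumc z f₀ (fun hc => hnz (crel_symm hc))
            (lemD z w hwD h) (lemE f₀ r₀ ⟨hfr, hr₀A⟩ hr₀R)
        · exact (hmemA.mp hwA).1 h
        · exact hsumc f₀ z hnz (lemD f₀ f₀ hfD hf₀F) (lemE z w hwD h)
      rcases em (crel G A f₀ x) with h1 | h1
      · rcases em (crel G A f₀ y) with h2 | h2
        · exact hxy ((crel_symm h1).trans h2)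
        · exact key y hyA h2
      · exact key x hxA h1
    · exact hsumc f₀ r₀ hfr (lemD f₀ f₀ hfD hf₀F) (lemE r₀ r₀ hrD hr₀R)
  -- conclusion
  obtain ⟨s₀, hs₀S, hs₀T⟩ : (S \ T).Nonempty := by
    apply diff_nonempty_of_ncard
    have h1 : (S ∩ T).ncard ≤ T.ncard :=
      Set.ncard_le_ncard Set.inter_subset_right (Set.toFinite _)
    omega
  have hs₀W : s₀ ∉ W := fun h => hWS s₀ h hs₀S
  obtain ⟨t₁, ht₁N, ht₁W, ht₁T⟩ : ∃ t, G.Adj s₀ t ∧ t ∉ W ∧ t ∉ T := by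
    by_contra hcon
    push_neg at hcon
    have hsub : G.neighborSet s₀ ⊆ (G.neighborSet s₀ ∩ W) ∪ T := by
      intro t ht
      have hadj : G.Adj s₀ t := ht
      by_cases hw : t ∈ W
      · exact Or.inl ⟨ht, hw⟩
      · exact Or.inr (hcon t hadj hw)
    have h1 := Set.ncard_le_ncard hsub (Set.toFinite _)
    have h2 := Set.ncard_union_le (G.neighborSet s₀ ∩ W) T
    have h3 := hpathW s₀
    have h4 := hδ s₀
    omega
  constructor
  · -- 2 ≤ T₀ᶜ.ncard
    have h1 : (1 : ℕ) < (T₀ᶜ : Set ↥(Wᶜ)).ncard := by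
      rw [Set.one_lt_ncard (Set.toFinite _)]
      refine ⟨⟨s₀, hs₀W⟩, ?_, ⟨t₁, ht₁W⟩, ?_, ?_⟩
      · intro hmem
        exact hs₀T ⟨_, hmem, rfl⟩
      · intro hmem
        exact ht₁T ⟨_, hmem, rfl⟩
      · intro he
        exact ht₁N.ne (congrArg Subtype.val he)
    omega
  · -- connectivity
    apply connected₂_of_crel
    · exact ⟨s₀, hs₀W, hs₀T⟩
    · intro x y hx hy
      exact main x hx y hy
end

section
/- Let (G,C) ∈ 𝒦ᵇ_k(⌈m/2⌉) with κ(G) = k, where k, m are positive integers. Let S be a minimum vertex-cut of G and F a fragment of G to S such that C ⊆ G[S ∪ F]. If there exists a path P ⊆ G - (S ∪ V(F)) of order at most m such that G⟨S⟩ - V(F ∪ P) is k-connected, then G - V(P) is k-connected. -/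
open SimpleGraph Set

/-- Walk connectivity within a vertex set `A`. -/
def ConG {V : Type*} (H : SimpleGraph V) (A : Set V) (u v : V) : Prop :=
  ∃ w : H.Walk u v, ∀ x ∈ w.support, x ∈ A

namespace ConG

variable {V : Type*} {H : SimpleGraph V} {A B : Set V}

lemma refl {u : V} (hu : u ∈ A) : ConG H A u u :=
  ⟨SimpleGraph.Walk.nil, by simp [hu]⟩

lemma symm {u v : V} (h : ConG H A u v) : ConG H A v u := by
  obtain ⟨w, hw⟩ := h
  exact ⟨w.reverse, by simpa using hw⟩

lemma trans {u v x : V} (h : ConG H A u v) (h' : ConG H A v x) : ConG H A u x := by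
  obtain ⟨w, hw⟩ := h; obtain ⟨w', hw'⟩ := h'
  refine ⟨w.append w', ?_⟩
  intro z hz
  rcases (SimpleGraph.Walk.mem_support_append_iff _ _).1 hz with h | h
  · exact hw _ h
  · exact hw' _ h

lemma adj {u v : V} (h : H.Adj u v) (hu : u ∈ A) (hv : v ∈ A) : ConG H A u v := by
  refine ⟨h.toWalk, ?_⟩
  intro z hz
  simp only [SimpleGraph.Adj.toWalk, SimpleGraph.Walk.support_cons,
    SimpleGraph.Walk.support_nil, List.mem_cons, List.mem_singleton] at hz
  rcases hz with rfl | rfl | h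
  · exact hu
  · exact hv
  · exact absurd h List.not_mem_nil

lemma mono (hAB : A ⊆ B) {u v : V} (h : ConG H A u v) : ConG H B u v := by
  obtain ⟨w, hw⟩ := h; exact ⟨w, fun z hz => hAB (hw z hz)⟩

lemma mem_left {u v : V} (h : ConG H A u v) : u ∈ A := by
  obtain ⟨w, hw⟩ := h; exact hw _ w.start_mem_support

lemma mem_right {u v : V} (h : ConG H A u v) : v ∈ A := by
  obtain ⟨w, hw⟩ := h; exact hw _ w.end_mem_support

private lemma exit_aux (Y : Set V) :
    ∀ {u v : V} (w : H.Walk u v), (∀ x ∈ w.support, x ∈ A) → u ∈ Y → v ∉ Y →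
      ∃ a b, H.Adj a b ∧ a ∈ Y ∧ b ∉ Y ∧ b ∈ A
  | _, _, SimpleGraph.Walk.nil, _, hu, hv => absurd hu hv
  | _, _, @SimpleGraph.Walk.cons _ _ _ d _ hadj w, hw, hu, hv => by
    by_cases hd : d ∈ Y
    · exact exit_aux Y w (fun z hz => hw z (by simp [hz])) hd hv
    · exact ⟨_, d, hadj, hu, hd, hw d (by simp)⟩

/-- first exit from a set `Y` along a confined walk. -/
lemma exit {u v : V} (h : ConG H A u v) (Y : Set V) (hu : u ∈ Y) (hv : v ∉ Y) :
    ∃ a b, H.Adj a b ∧ a ∈ Y ∧ b ∉ Y ∧ b ∈ A := by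
  obtain ⟨w, hw⟩ := h
  exact exit_aux Y w hw hu hv

end ConG

section proj

variable {V : Type*} {H : SimpleGraph V} {A : Set V}

private lemma con_image_aux {B : Set ↥A} :
    ∀ {u v : ↥A} (w : (H.induce A).Walk u v), (∀ x ∈ w.support, x ∈ B) →
      ConG H (Subtype.val '' B) ↑u ↑v
  | _, _, SimpleGraph.Walk.nil, hw =>
    ConG.refl (Set.mem_image_of_mem _ (hw _ (by simp)))
  | _, _, @SimpleGraph.Walk.cons _ _ c d _ hadj w, hw => by
    have h1 := con_image_aux w (fun z hz => hw z (by simp [hz]))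
    have hadj' : H.Adj ↑c ↑d := hadj
    exact (ConG.adj hadj' (Set.mem_image_of_mem _ (hw c (by simp))) h1.mem_left).trans h1

/-- project a walk confined in a subtype-set of an induced graph down to the ambient graph. -/
lemma con_image {B : Set ↥A} {u v : ↥A} (h : ConG (H.induce A) B u v) :
    ConG H (Subtype.val '' B) ↑u ↑v := by
  obtain ⟨w, hw⟩ := h
  exact con_image_aux w hw

lemma reach_to_con {u v : ↥A} (h : (H.induce A).Reachable u v) :
    ConG H A ↑u ↑v := by
  obtain ⟨w⟩ := h
  have h2 := con_image (B := Set.univ) ⟨w, fun z _ => trivial⟩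
  rwa [Set.image_univ, Subtype.range_coe] at h2

private lemma con_lift_aux {A' : Set V} (hsub : A' ⊆ A) :
    ∀ {u v : V} (w : H.Walk u v), (∀ x ∈ w.support, x ∈ A') →
      ∀ (hu : u ∈ A) (hv : v ∈ A),
      ConG (H.induce A) {z : ↥A | ↑z ∈ A'} ⟨u, hu⟩ ⟨v, hv⟩
  | _, _, SimpleGraph.Walk.nil, hw, hu, _ => ConG.refl (hw _ (by simp))
  | _, _, @SimpleGraph.Walk.cons _ _ c d _ hadj w, hw, hu, hv => by
    have hd : d ∈ A' := hw d (by simp)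
    have h1 := con_lift_aux hsub w (fun z hz => hw z (by simp [hz])) (hsub hd) hv
    have hadj' : (H.induce A).Adj ⟨c, hu⟩ ⟨d, hsub hd⟩ := hadj
    exact (ConG.adj hadj' (hw c (by simp)) hd).trans h1

/-- lift a confined walk into an induced graph on a larger set. -/
lemma con_lift {A' : Set V} {u v : V} (h : ConG H A' u v) (hsub : A' ⊆ A)
    (hu : u ∈ A) (hv : v ∈ A) :
    ConG (H.induce A) {z : ↥A | ↑z ∈ A'} ⟨u, hu⟩ ⟨v, hv⟩ := by
  obtain ⟨w, hw⟩ := h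
  exact con_lift_aux hsub w hw hu hv

end proj

section helpers

variable {V : Type*} [Fintype V]

lemma addClique_adj {G : SimpleGraph V} {S : Set V} {u v : V} :
    (addClique G S).Adj u v ↔ G.Adj u v ∨ (u ≠ v ∧ u ∈ S ∧ v ∈ S) := by
  simp only [addClique, SimpleGraph.sup_adj, SimpleGraph.fromRel_adj]
  constructor
  · rintro (h | ⟨hne, h | h⟩)
    · exact Or.inl h
    · exact Or.inr ⟨hne, h⟩
    · exact Or.inr ⟨hne, h.2, h.1⟩
  · rintro (h | ⟨hne, h⟩)
    · exact Or.inl h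
    · exact Or.inr ⟨hne, Or.inl h⟩

private lemma chain_filter_le {α : Type*} (P : α → Bool) :
    ∀ l : List α, l.Chain' (fun x y => ¬(P x = true ∧ P y = true)) →
      (l.filter P).length ≤ (l.length + 1) / 2
  | [], _ => by simp
  | [x], _ => by by_cases h : P x <;> simp [List.filter, h]
  | x :: y :: t, hch => by
    have h1 : ¬(P x = true ∧ P y = true) := (List.isChain_cons_cons.1 hch).1
    have h2 := (List.isChain_cons_cons.1 hch).2
    have h3 := h2.tail
    by_cases hx : P x = true
    · have hy : P y = false := by
        revert h1; cases hx' : P x <;> cases hy' : P y <;> simp_all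
      have ht := chain_filter_le P t h3
      simp only [List.filter_cons, hx, hy, if_true, List.length_cons]
      simp only [Bool.false_eq_true, if_false]
      omega
    · have ht := chain_filter_le P (y :: t) h2
      simp only [List.filter_cons, hx, if_false, List.length_cons] at *
      rw [if_neg hx]
      omega

private lemma chain'_imp_mem {α : Type*} {R R' : α → α → Prop} :
    ∀ (l : List α), l.Chain' R → (∀ x ∈ l, ∀ y ∈ l, R x y → R' x y) → l.Chain' R'
  | [], _, _ => List.isChain_nil
  | [x], _, _ => List.isChain_singleton x
  | x :: y :: t, h, him => by
    simp only [List.Chain', List.isChain_cons_cons] at h ⊢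
    refine ⟨him x (by simp) y (by simp) h.1, chain'_imp_mem (y :: t) h.2 ?_⟩
    intro a ha b hb hr
    exact him a (List.mem_cons_of_mem _ ha) b (List.mem_cons_of_mem _ hb) hr

open Classical in
/-- number of elements of a list belonging to a set, with no two consecutive ones. -/
lemma ncard_inter_list_le {l : List α} {Q : Set α}
    (hch : l.Chain' (fun x y => ¬(x ∈ Q ∧ y ∈ Q))) :
    ({x | x ∈ l} ∩ Q).ncard ≤ (l.length + 1) / 2 := by
  classical
  have hset : ({x | x ∈ l} ∩ Q) = {x | x ∈ l.filter (fun a => decide (a ∈ Q))} := by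
    ext x
    simp [List.mem_filter]
  rw [hset]
  have : {x | x ∈ l.filter (fun a => decide (a ∈ Q))}
      = ↑((l.filter (fun a => decide (a ∈ Q))).toFinset) := by
    ext x; simp
  rw [this, Set.ncard_coe_finset]
  calc ((l.filter (fun a => decide (a ∈ Q))).toFinset).card
      ≤ (l.filter (fun a => decide (a ∈ Q))).length := List.toFinset_card_le _
    _ ≤ (l.length + 1) / 2 := by
        apply chain_filter_le
        apply chain'_imp_mem l hch
        intro x _ y _ hr
        simpa using hr

lemma kconn_con {H : SimpleGraph V} {k : ℕ} (h : KConn H k) {X : Set V}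
    (hX : X.ncard < k) {u v : V} (hu : u ∉ X) (hv : v ∉ X) : ConG H Xᶜ u v := by
  have h2 := (h X hX).2
  exact reach_to_con (h2.preconnected ⟨u, hu⟩ ⟨v, hv⟩)

lemma kconn_induce_con {H : SimpleGraph V} {Wset : Set V} {k : ℕ}
    (h : KConn (H.induce Wset) k) {X : Set V} (hX : X.ncard < k)
    {u v : V} (hu : u ∈ Wset \ X) (hv : v ∈ Wset \ X) : ConG H (Wset \ X) u v := by
  classical
  set Xt : Set ↥Wset := {z | ↑z ∈ X} with hXt
  have himg : Subtype.val '' Xt ⊆ X := by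
    rintro x ⟨z, hz, rfl⟩; exact hz
  have hcard : Xt.ncard ≤ X.ncard := by
    rw [← Set.ncard_image_of_injective Xt Subtype.val_injective]
    exact Set.ncard_le_ncard himg (Set.toFinite _)
  have h2 := (h Xt (lt_of_le_of_lt hcard hX)).2
  have hr := h2.preconnected ⟨⟨u, hu.1⟩, fun hh => hu.2 hh⟩ ⟨⟨v, hv.1⟩, fun hh => hv.2 hh⟩
  have hcon := reach_to_con hr
  have hcon2 := con_image hcon
  have : Subtype.val '' (Xtᶜ : Set ↥Wset) = Wset \ X := by
    ext x
    constructor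
    · rintro ⟨z, hz, rfl⟩; exact ⟨z.2, hz⟩
    · rintro ⟨hxW, hxX⟩; exact ⟨⟨x, hxW⟩, hxX, rfl⟩
  rwa [this] at hcon2

end helpers

/-- Lemma 2.4: (G,C) ∈ 𝒦ᵇ_k(⌈m/2⌉) with κ(G) = k, S a minimum vertex-cut and
F a fragment of G to S with C ⊆ G[S ∪ F]. If a path P ⊆ G - (S ∪ V(F)) of
order at most m satisfies that G⟨S⟩ - V(F ∪ P) is k-connected, then G - V(P)
is k-connected. -/
theorem stmt11 {V : Type*} [Fintype V] (G : SimpleGraph V) (C : Set V) (k m : ℕ)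
    (hk : 1 ≤ k) (hm : 1 ≤ m)
    (hclass : KClassB G C k ((m + 1) / 2))
    (S F : Set V) (hS : S.ncard = k) (hScut : ¬ (G.induce Sᶜ).Connected)
    (hF : IsSemifragment G S F) (hC : C ⊆ S ∪ F)
    {a b : V} (p : G.Walk a b) (hp : p.IsPath)
    (hPout : ∀ x ∈ p.support, x ∈ (S ∪ F)ᶜ)
    (hPord : p.support.length ≤ m)
    (hcut : KConn ((addClique G S).induce (F ∪ {x | x ∈ p.support})ᶜ) k) :    KConn (G.induce {x | x ∈ p.support}ᶜ) k := by
  classical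
  obtain ⟨hkconn, hCcard, hCclique, _hbip, hdeg, hcom⟩ := hclass
  obtain ⟨-, -, hFSc, hFBadj⟩ := hF
  set Pset : Set V := {x | x ∈ p.support} with hPset
  intro T hT
  set B : Set V := Sᶜ \ F with hB
  set W : Set V := (F ∪ Pset)ᶜ with hW
  set T' : Set V := Subtype.val '' T with hT'def
  -- basic set facts
  have hT'P : ∀ x ∈ T', x ∉ Pset := by
    rintro x ⟨z, _, rfl⟩; exact z.2
  have ht : T'.ncard < k := by
    rwa [hT'def, Set.ncard_image_of_injective _ Subtype.val_injective]
  have hPS : ∀ x ∈ Pset, x ∉ S := fun x hx hs => (hPout x hx) (Or.inl hs)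
  have hPF : ∀ x ∈ Pset, x ∉ F := fun x hx hs => (hPout x hx) (Or.inr hs)
  have hPB : Pset ⊆ B := fun x hx => ⟨hPS x hx, hPF x hx⟩
  have hFS : ∀ x ∈ F, x ∉ S := fun x hx => hFSc hx
  have hpart : ∀ x : V, x ∈ S ∨ x ∈ F ∨ x ∈ B := by
    intro x
    by_cases h1 : x ∈ S
    · exact Or.inl h1
    · by_cases h2 : x ∈ F
      · exact Or.inr (Or.inl h2)
      · exact Or.inr (Or.inr ⟨h1, h2⟩)
  have hFB : ∀ u ∈ F, ∀ w ∈ B, ¬ G.Adj u w := fun u hu w hw => hFBadj u hu w hw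
  have hBF : ∀ u ∈ B, ∀ w ∈ F, ¬ G.Adj u w := fun u hu w hw h =>
    hFBadj w hw u hu h.symm
  have hSW : S ⊆ W := by
    intro x hx h'
    rcases h' with h' | h'
    · exact hFS x h' hx
    · exact hPS x h' hx
  have hBPW : B \ Pset ⊆ W := by
    rintro x ⟨hxB, hxP⟩ h'
    rcases h' with h' | h'
    · exact hxB.2 h'
    · exact hxP h'
  have hWSB : ∀ x ∈ W, x ∉ F ∧ x ∉ Pset := by
    intro x hx
    constructor
    · exact fun h => hx (Or.inl h)
    · exact fun h => hx (Or.inr h)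
  set AH : Set V := (Pset ∪ T')ᶜ with hAH
  have hAHmem : ∀ x, x ∈ AH ↔ (x ∉ Pset ∧ x ∉ T') := by
    intro x
    constructor
    · exact fun h => ⟨fun h1 => h (Or.inl h1), fun h1 => h (Or.inr h1)⟩
    · rintro ⟨h1, h2⟩ (h | h)
      · exact h1 h
      · exact h2 h
  have hSsubAH : S \ T' ⊆ AH := by
    rintro x ⟨hxS, hxT⟩
    exact (hAHmem x).2 ⟨fun h => hPS x h hxS, hxT⟩
  have hFsubAH : F \ T' ⊆ AH := by
    rintro x ⟨hxF, hxT⟩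
    exact (hAHmem x).2 ⟨fun h => hPF x h hxF, hxT⟩
  have hBsubAH : B \ (Pset ∪ T') ⊆ AH := fun x hx => hx.2
  set Sσ : Set V := S \ T' with hSσ
  set tS : ℕ := (T' ∩ S).ncard with htS
  set tF : ℕ := (T' ∩ F).ncard with htF
  set tB : ℕ := (T' ∩ B).ncard with htB
  have hsplit : tS + tF + tB ≤ T'.ncard := by
    have d1 : Disjoint (T' ∩ S) (T' ∩ F) := by
      rw [Set.disjoint_left]
      rintro x ⟨_, hxS⟩ ⟨_, hxF⟩
      exact hFS x hxF hxS
    have d2 : Disjoint ((T' ∩ S) ∪ (T' ∩ F)) (T' ∩ B) := by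
      rw [Set.disjoint_left]
      rintro x (⟨_, hxS⟩ | ⟨_, hxF⟩) ⟨_, hxB⟩
      · exact hxB.1 hxS
      · exact hxB.2 hxF
    have e1 : ((T' ∩ S) ∪ (T' ∩ F)).ncard = tS + tF :=
      Set.ncard_union_eq d1 (Set.toFinite _) (Set.toFinite _)
    have e2 : ((T' ∩ S) ∪ (T' ∩ F) ∪ (T' ∩ B)).ncard = tS + tF + tB := by
      rw [Set.ncard_union_eq d2 (Set.toFinite _) (Set.toFinite _), e1]
    rw [← e2]
    apply Set.ncard_le_ncard _ (Set.toFinite _)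
    rintro x ((⟨hx, _⟩ | ⟨hx, _⟩) | ⟨hx, _⟩) <;> exact hx
  have hSσcard : Sσ.ncard + tS = k := by
    have h0 : Sσ = S \ (T' ∩ S) := by
      rw [hSσ, Set.diff_inter_self_eq_diff]
    have h1 : (S \ (T' ∩ S)).ncard = S.ncard - (T' ∩ S).ncard :=
      Set.ncard_diff Set.inter_subset_right (Set.toFinite _)
    have h2 : tS ≤ k := by
      rw [htS, ← hS]
      exact Set.ncard_le_ncard Set.inter_subset_right (Set.toFinite _)
    rw [h0, h1, hS]
    omega
  have hCc : ∀ x ∈ Pset, x ∈ Cᶜ := by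
    intro x hx hxC
    rcases hC hxC with h | h
    · exact hPS x hx h
    · exact hPF x hx h
  have hBc : ∀ x ∈ B, x ∈ Cᶜ := by
    intro x hx hxC
    rcases hC hxC with h | h
    · exact hx.1 h
    · exact hx.2 h
  have hPm : Pset.ncard ≤ m := by
    have h0 : Pset = ↑p.support.toFinset := by
      ext x; simp [hPset]
    rw [h0, Set.ncard_coe_finset]
    exact le_trans (List.toFinset_card_le _) hPord
  have hnbrP : ∀ w : V, ((G.neighborSet w) ∩ Pset).ncard ≤ (m + 1) / 2 := by
    intro w
    have hch : p.support.Chain'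
        (fun x y => ¬(x ∈ G.neighborSet w ∧ y ∈ G.neighborSet w)) := by
      apply chain'_imp_mem _ p.isChain_adj_support
      rintro x hx y hy hxy ⟨h1, h2⟩
      exact hcom x (hCc x hx) y (hCc y hy) hxy w ⟨h1.symm, h2.symm⟩
    have h0 := ncard_inter_list_le hch
    rw [Set.inter_comm]
    refine le_trans h0 (Nat.div_le_div_right ?_)
    omega
  have hWcard : k + 1 ≤ W.ncard := by
    by_contra hlt
    push_neg at hlt
    rcases Set.eq_empty_or_nonempty W with hE | ⟨w₀, hw₀⟩
    · have h0 := (hcut ∅ (by simp; omega)).1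
      rw [Set.compl_empty, Set.ncard_univ, Nat.card_coe_set_eq, hE,
        Set.ncard_empty] at h0
      omega
    · have hXc : ({(⟨w₀, hw₀⟩ : ↥W)}ᶜ : Set ↥W).ncard + 1 = W.ncard := by
        have h2 : ({(⟨w₀, hw₀⟩ : ↥W)} : Set ↥W).ncard
            + ({(⟨w₀, hw₀⟩ : ↥W)}ᶜ : Set ↥W).ncard = Nat.card ↥W :=
          Set.ncard_add_ncard_compl _
        rw [Nat.card_coe_set_eq] at h2
        rw [Set.ncard_singleton] at h2
        omega
      have h0 := (hcut ({(⟨w₀, hw₀⟩ : ↥W)}ᶜ) (by omega)).1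
      rw [compl_compl, Set.ncard_singleton] at h0
      omega
  -- main structural facts
  have factA : ∀ v ∈ F \ T', ∃ NS : Set V, NS ⊆ Sσ ∧ k ≤ NS.ncard + tS + tF ∧
      ∀ s ∈ NS, ConG G AH v s := by
    intro v hv
    set Y : Set V := {u | u ∈ F \ T' ∧ ConG G (F \ T') v u} with hY
    set NS : Set V := {s | s ∈ Sσ ∧ ∃ y ∈ Y, G.Adj y s} with hNS
    have hYF : Y ⊆ F \ T' := fun u hu => hu.1
    refine ⟨NS, fun s hs => hs.1, ?_, ?_⟩
    · by_contra hcnt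
      push_neg at hcnt
      set X : Set V := (T' ∩ S) ∪ (T' ∩ F) ∪ NS with hX
      have hXcard : X.ncard < k := by
        rw [hX]
        have h1 := Set.ncard_union_le ((T' ∩ S) ∪ (T' ∩ F)) NS
        have h2 := Set.ncard_union_le (T' ∩ S) (T' ∩ F)
        omega
      have hvX : v ∉ X := by
        rintro ((⟨hvT, _⟩ | ⟨hvT, _⟩) | ⟨⟨hvS, _⟩, _⟩)
        · exact hv.2 hvT
        · exact hv.2 hvT
        · exact hFS v hv.1 hvS
      have haP : a ∈ Pset := by
        rw [hPset]; exact p.start_mem_support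
      have haX : a ∉ X := by
        rintro ((⟨hvT, _⟩ | ⟨hvT, _⟩) | ⟨⟨hvS, _⟩, _⟩)
        · exact hT'P a hvT haP
        · exact hT'P a hvT haP
        · exact hPS a haP hvS
      have hcon := kconn_con hkconn hXcard hvX haX
      have haY : a ∉ Y := fun hy => hPF a haP hy.1.1
      have hvY : v ∈ Y := ⟨hv, ConG.refl hv⟩
      obtain ⟨y, bb, hadj, hyY, hbY, hbX⟩ := hcon.exit Y hvY haY
      have hyF : y ∈ F := hyY.1.1
      rcases hpart bb with hbb | hbb | hbb
      · by_cases hbT : bb ∈ T'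
        · exact hbX (Or.inl (Or.inl ⟨hbT, hbb⟩))
        · exact hbX (Or.inr ⟨⟨hbb, hbT⟩, y, hyY, hadj⟩)
      · by_cases hbT : bb ∈ T'
        · exact hbX (Or.inl (Or.inr ⟨hbT, hbb⟩))
        · exact hbY ⟨⟨hbb, hbT⟩, hyY.2.trans (ConG.adj hadj hyY.1 ⟨hbb, hbT⟩)⟩
      · exact hFB y hyF bb hbb hadj
    · rintro s ⟨hsσ, y, hyY, hadj⟩
      exact ((hyY.2.mono hFsubAH).trans
        (ConG.adj hadj (hFsubAH hyY.1) (hSsubAH hsσ)))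
  have factB : ∀ v ∈ B \ (Pset ∪ T'), ∃ NS : Set V, NS ⊆ Sσ ∧ k ≤ NS.ncard + tS + tB ∧
      ∀ s ∈ NS, ConG G AH v s := by
    intro v hv
    set Y : Set V := {u | u ∈ B \ (Pset ∪ T') ∧ ConG G (B \ (Pset ∪ T')) v u} with hY
    set NS : Set V := {s | s ∈ Sσ ∧ ∃ y ∈ Y, G.Adj y s} with hNS
    have hYB : Y ⊆ B \ (Pset ∪ T') := fun u hu => hu.1
    refine ⟨NS, fun s hs => hs.1, ?_, ?_⟩
    · by_contra hcnt
      push_neg at hcnt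
      set X : Set V := (T' ∩ S) ∪ (T' ∩ B) ∪ NS with hX
      have hXcard : X.ncard < k := by
        rw [hX]
        have h1 := Set.ncard_union_le ((T' ∩ S) ∪ (T' ∩ B)) NS
        have h2 := Set.ncard_union_le (T' ∩ S) (T' ∩ B)
        omega
      -- a witness vertex z ∈ Sσ \ NS
      have hzex : ∃ z, z ∈ Sσ ∧ z ∉ NS := by
        by_contra hall
        push_neg at hall
        have : Sσ ⊆ NS := fun z hz => hall z hz
        have := Set.ncard_le_ncard this (Set.toFinite _)
        omega
      obtain ⟨z, hzσ, hzNS⟩ := hzex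
      have hvW : v ∈ W \ X := by
        refine ⟨hBPW ⟨hv.1, fun h => hv.2 (Or.inl h)⟩, ?_⟩
        rintro ((⟨hvT, _⟩ | ⟨hvT, _⟩) | ⟨⟨hvS, _⟩, _⟩)
        · exact hv.2 (Or.inr hvT)
        · exact hv.2 (Or.inr hvT)
        · exact hv.1.1 hvS
      have hzW : z ∈ W \ X := by
        refine ⟨hSW hzσ.1, ?_⟩
        rintro ((⟨hvT, _⟩ | ⟨hvT, _⟩) | hzN)
        · exact hzσ.2 hvT
        · exact hzσ.2 hvT
        · exact hzNS hzN
      have hcon := kconn_induce_con hcut hXcard hvW hzW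
      have hzY : z ∉ Y := fun hy => hy.1.1.1 hzσ.1
      have hvY : v ∈ Y := ⟨hv, ConG.refl hv⟩
      obtain ⟨y, bb, hadj, hyY, hbY, hbWX⟩ := hcon.exit Y hvY hzY
      have hyB : y ∈ B := hyY.1.1
      have hadj' : G.Adj y bb := by
        rcases addClique_adj.1 hadj with h | ⟨_, hyS, _⟩
        · exact h
        · exact absurd hyS hyB.1
      obtain ⟨hbW, hbX⟩ := hbWX
      obtain ⟨hbF, hbP⟩ := hWSB bb hbW
      rcases hpart bb with hbb | hbb | hbb
      · by_cases hbT : bb ∈ T'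
        · exact hbX (Or.inl (Or.inl ⟨hbT, hbb⟩))
        · exact hbX (Or.inr ⟨⟨hbb, hbT⟩, y, hyY, hadj'⟩)
      · exact hbF hbb
      · by_cases hbT : bb ∈ T'
        · exact hbX (Or.inl (Or.inr ⟨hbT, hbb⟩))
        · refine hbY ⟨⟨hbb, ?_⟩, hyY.2.trans (ConG.adj hadj' hyY.1 ⟨hbb, ?_⟩)⟩
          · rintro (h | h)
            · exact hbP h
            · exact hbT h
          · rintro (h | h)
            · exact hbP h
            · exact hbT h
    · rintro s ⟨hsσ, y, hyY, hadj⟩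
      exact ((hyY.2.mono hBsubAH).trans
        (ConG.adj hadj (hBsubAH hyY.1) (hSsubAH hsσ)))
  have hNSne : ∀ {NS : Set V} {c : ℕ}, NS ⊆ Sσ → k ≤ NS.ncard + tS + c → c ≤ tB + tF →
      NS.Nonempty := by
    intro NS c _ h1 h2
    apply Set.nonempty_of_ncard_ne_zero
    omega
  have hone : ∀ s₁ ∈ Sσ, ∀ s₂ ∈ Sσ, ConG G AH s₁ s₂ := by
    by_contra hcon0
    push_neg at hcon0
    obtain ⟨s₁, hs₁, s₂, hs₂, hns⟩ := hcon0
    set cls : V → Set V := fun s => {s' | s' ∈ Sσ ∧ ConG G AH s s'} with hcls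
    have hclsS : ∀ s, cls s ⊆ Sσ := fun s x hx => hx.1
    have hclseq : ∀ s s', ConG G AH s s' → cls s = cls s' := by
      intro s s' h; ext x
      exact ⟨fun hx => ⟨hx.1, h.symm.trans hx.2⟩, fun hx => ⟨hx.1, h.trans hx.2⟩⟩
    have hsum : ∀ x ∈ Sσ, ∀ y ∈ Sσ, ¬ConG G AH x y →
        (cls x).ncard + (cls y).ncard + tS ≤ k := by
      intro x hx y hy hxy
      have hd : Disjoint (cls x) (cls y) := by
        rw [Set.disjoint_left]
        rintro z ⟨_, hz1⟩ ⟨_, hz2⟩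
        exact hxy (hz1.trans hz2.symm)
      have hu : (cls x ∪ cls y).ncard = (cls x).ncard + (cls y).ncard :=
        Set.ncard_union_eq hd (Set.toFinite _) (Set.toFinite _)
      have hsb : cls x ∪ cls y ⊆ Sσ := Set.union_subset (hclsS x) (hclsS y)
      have := Set.ncard_le_ncard hsb (Set.toFinite _)
      omega
    set attF : V → Prop := fun s => ∃ v ∈ F \ T', ConG G AH v s with hattF
    set attB : V → Prop := fun s => ∃ v ∈ B \ (Pset ∪ T'), ConG G AH v s with hattB
    have bndF : ∀ s ∈ Sσ, attF s → k ≤ (cls s).ncard + tS + tF := by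
      rintro s hs ⟨v, hv, hvs⟩
      obtain ⟨NS, hsub, hcard, hcons⟩ := factA v hv
      have hsub2 : NS ⊆ cls s := fun σ hσ => ⟨hsub hσ, hvs.symm.trans (hcons σ hσ)⟩
      have := Set.ncard_le_ncard hsub2 (Set.toFinite _)
      omega
    have bndB : ∀ s ∈ Sσ, attB s → k ≤ (cls s).ncard + tS + tB := by
      rintro s hs ⟨v, hv, hvs⟩
      obtain ⟨NS, hsub, hcard, hcons⟩ := factB v hv
      have hsub2 : NS ⊆ cls s := fun σ hσ => ⟨hsub hσ, hvs.symm.trans (hcons σ hσ)⟩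
      have := Set.ncard_le_ncard hsub2 (Set.toFinite _)
      omega
    have pairC : ∀ x ∈ Sσ, ∀ y ∈ Sσ, ¬ConG G AH x y →
        k ≤ (cls x).ncard + tS + tF → k ≤ (cls y).ncard + tS + tB → False := by
      intro x hx y hy hxy h1 h2
      have h3 := hsum x hx y hy hxy
      omega
    have hCP : ∀ c ∈ C, c ∉ Pset := fun c hc hp => (hCc c hp) hc
    have hCAH : ∀ c ∈ C, c ∉ T' → c ∈ AH := fun c hc hcT =>
      (hAHmem c).2 ⟨hCP c hc, hcT⟩
    have hCcon : ∀ c ∈ C, ∀ c' ∈ C, c ∉ T' → c' ∉ T' → ConG G AH c c' := by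
      intro c hc c' hc' hcT hcT'
      by_cases he : c = c'
      · subst he; exact ConG.refl (hCAH c hc hcT)
      · exact ConG.adj (hCclique c hc c' hc' he) (hCAH c hc hcT) (hCAH c' hc' hcT')
    have hCcount : ∀ s, (C ∩ F ⊆ T') → (C ∩ Sσ ⊆ cls s) →
        k ≤ (cls s).ncard + tS + tF := by
      intro s h1 h2
      have hd : Disjoint (C ∩ S) (C ∩ F) := by
        rw [Set.disjoint_left]
        rintro x ⟨_, hxS⟩ ⟨_, hxF⟩
        exact hFS x hxF hxS
      have he : (C ∩ S) ∪ (C ∩ F) = C := by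
        ext x
        constructor
        · rintro (⟨h, _⟩ | ⟨h, _⟩) <;> exact h
        · intro hx
          rcases hC hx with h | h
          · exact Or.inl ⟨hx, h⟩
          · exact Or.inr ⟨hx, h⟩
      have hcc : (C ∩ S).ncard + (C ∩ F).ncard = k := by
        rw [← Set.ncard_union_eq hd (Set.toFinite _) (Set.toFinite _), he, hCcard]
      have h3 : (C ∩ F).ncard ≤ tF := by
        apply Set.ncard_le_ncard _ (Set.toFinite _)
        exact fun x hx => ⟨h1 hx, hx.2⟩
      have h4 : (C ∩ S).ncard ≤ (C ∩ Sσ).ncard + tS := by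
        have hsb : C ∩ S ⊆ (C ∩ Sσ) ∪ (T' ∩ S) := by
          rintro x ⟨hxC, hxS⟩
          by_cases hxT : x ∈ T'
          · exact Or.inr ⟨hxT, hxS⟩
          · exact Or.inl ⟨hxC, hxS, hxT⟩
        exact le_trans (Set.ncard_le_ncard hsb (Set.toFinite _))
          (Set.ncard_union_le _ _)
      have h5 : (C ∩ Sσ).ncard ≤ (cls s).ncard :=
        Set.ncard_le_ncard h2 (Set.toFinite _)
      omega
    have hCSσcls : ∀ s ∈ Sσ, ∀ c' ∈ C ∩ Sσ, ConG G AH s c' → C ∩ Sσ ⊆ cls s := by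
      rintro s hs c' hc' hcon x hx
      exact ⟨hx.2, hcon.trans (hCcon c' hc'.1 x hx.1 hc'.2.2 hx.2.2)⟩
    have hNsub : ∀ s ∈ Sσ, ¬attF s → ¬attB s →
        G.neighborSet s ⊆ (cls s \ {s}) ∪ T' ∪ (G.neighborSet s ∩ Pset) := by
      intro s hs hnF hnB x hx
      by_cases hxP : x ∈ Pset
      · exact Or.inr ⟨hx, hxP⟩
      by_cases hxT : x ∈ T'
      · exact Or.inl (Or.inr hxT)
      have hxAH : x ∈ AH := (hAHmem x).2 ⟨hxP, hxT⟩
      have hconx : ConG G AH s x := ConG.adj hx (hSsubAH hs) hxAH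
      rcases hpart x with h | h | h
      · refine Or.inl (Or.inl ⟨⟨⟨h, hxT⟩, hconx⟩, fun he => ?_⟩)
        exact (G.ne_of_adj hx) (Set.mem_singleton_iff.1 he).symm
      · exact absurd ⟨x, ⟨h, hxT⟩, hconx.symm⟩ hnF
      · exact absurd ⟨x, ⟨h, fun hh => hh.elim hxP hxT⟩, hconx.symm⟩ hnB
    have hunatt : ∀ s ∈ Sσ, ¬attF s → ¬attB s → k ≤ (cls s).ncard + tS + tF := by
      intro s hs hnF hnB
      by_cases hsC : s ∈ C
      · have hCF : C ∩ F ⊆ T' := by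
          rintro c ⟨hcC, hcF⟩
          by_contra hcT
          exact hnF ⟨c, ⟨hcF, hcT⟩, hCcon c hcC s hsC hcT hs.2⟩
        exact hCcount s hCF (hCSσcls s hs s ⟨hsC, hs⟩ (ConG.refl (hSsubAH hs)))
      · have hdegs := hdeg s hsC
        have hcov := hNsub s hs hnF hnB
        have hsplitN : G.neighborSet s ⊆
            (G.neighborSet s ∩ (cls s \ {s})) ∪ T' ∪ (G.neighborSet s ∩ Pset) := by
          intro x hx
          rcases hcov hx with (h | h) | h
          · exact Or.inl (Or.inl ⟨hx, h⟩)
          · exact Or.inl (Or.inr h)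
          · exact Or.inr h
        have hb1 : (G.neighborSet s).ncard ≤
            (G.neighborSet s ∩ (cls s \ {s})).ncard + T'.ncard + (m + 1) / 2 := by
          refine le_trans (Set.ncard_le_ncard hsplitN (Set.toFinite _)) ?_
          have u1 := Set.ncard_union_le
            ((G.neighborSet s ∩ (cls s \ {s})) ∪ T') (G.neighborSet s ∩ Pset)
          have u2 := Set.ncard_union_le (G.neighborSet s ∩ (cls s \ {s})) T'
          have u3 := hnbrP s
          omega
        have hne : (G.neighborSet s ∩ (cls s \ {s})).Nonempty := by
          apply Set.nonempty_of_ncard_ne_zero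
          omega
        obtain ⟨s', hs'N, hs'cls, hs'ne⟩ := hne
        by_cases hs'C : s' ∈ C
        · have hCF : C ∩ F ⊆ T' := by
            rintro c ⟨hcC, hcF⟩
            by_contra hcT
            exact hnF ⟨c, ⟨hcF, hcT⟩,
              (hCcon c hcC s' hs'C hcT hs'cls.1.2).trans hs'cls.2.symm⟩
          exact hCcount s hCF (hCSσcls s hs s' ⟨hs'C, hs'cls.1⟩ hs'cls.2)
        · exfalso
          have hadj : G.Adj s s' := hs'N
          have hdisjN : Disjoint (G.neighborSet s) (G.neighborSet s') := by
            rw [Set.disjoint_left]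
            intro w hw hw'
            exact hcom s hsC s' hs'C hadj w ⟨hw, hw'⟩
          have hnF' : ¬attF s' := fun hh => by
            obtain ⟨v, hv, hvc⟩ := hh
            exact hnF ⟨v, hv, hvc.trans hs'cls.2.symm⟩
          have hnB' : ¬attB s' := fun hh => by
            obtain ⟨v, hv, hvc⟩ := hh
            exact hnB ⟨v, hv, hvc.trans hs'cls.2.symm⟩
          have hcov' := hNsub s' hs'cls.1 hnF' hnB'
          have hcls' : cls s' = cls s := (hclseq s s' hs'cls.2).symm
          have hsub2 : G.neighborSet s ∪ G.neighborSet s' ⊆ (cls s) ∪ T' ∪ Pset := by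
            intro x hx
            rcases hx with hx | hx
            · rcases hcov hx with (h | h) | h
              · exact Or.inl (Or.inl h.1)
              · exact Or.inl (Or.inr h)
              · exact Or.inr h.2
            · rcases hcov' hx with (h | h) | h
              · exact Or.inl (Or.inl (hcls' ▸ h.1))
              · exact Or.inl (Or.inr h)
              · exact Or.inr h.2
          have hu : (G.neighborSet s ∪ G.neighborSet s').ncard
              = (G.neighborSet s).ncard + (G.neighborSet s').ncard :=
            Set.ncard_union_eq hdisjN (Set.toFinite _) (Set.toFinite _)
          have hb2 := Set.ncard_le_ncard hsub2 (Set.toFinite _)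
          have hb3 := Set.ncard_union_le (cls s ∪ T') Pset
          have hb4 := Set.ncard_union_le (cls s) T'
          have hclsk : (cls s).ncard ≤ k := by
            have := Set.ncard_le_ncard (hclsS s) (Set.toFinite _)
            omega
          have hdeg' := hdeg s' hs'C
          omega
    have bnd : ∀ s ∈ Sσ,
        k ≤ (cls s).ncard + tS + tF ∨ (attB s ∧ k ≤ (cls s).ncard + tS + tB) := by
      intro s hs
      by_cases h1 : attF s
      · exact Or.inl (bndF s hs h1)
      by_cases h2 : attB s
      · exact Or.inr ⟨h2, bndB s hs h2⟩
      · exact Or.inl (hunatt s hs h1 h2)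
    have Ecase : B ⊆ Pset ∪ T' → k ≤ tS + 2 * tF → False := by
      intro hBPT hk2
      have haP : a ∈ Pset := p.start_mem_support
      have haB : a ∈ B := hPB haP
      have haC : a ∈ Cᶜ := hBc a haB
      by_cases hEdge : ∃ u, G.Adj a u ∧ u ∈ B
      · obtain ⟨u, hadj, huB⟩ := hEdge
        have hcnt : ∀ x ∈ B, k ≤ (G.neighborSet x ∩ S).ncard + tB := by
          intro x hxB
          have hxC : x ∈ Cᶜ := hBc x hxB
          have hcov : G.neighborSet x ⊆
              (G.neighborSet x ∩ S) ∪ (G.neighborSet x ∩ Pset) ∪ (T' ∩ B) := by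
            intro z hz
            rcases hpart z with h | h | h
            · exact Or.inl (Or.inl ⟨hz, h⟩)
            · exact absurd hz (hBF x hxB z h)
            · by_cases hzP : z ∈ Pset
              · exact Or.inl (Or.inr ⟨hz, hzP⟩)
              · have hzT : z ∈ T' := by
                  rcases hBPT h with h' | h'
                  · exact absurd h' hzP
                  · exact h'
                exact Or.inr ⟨hzT, h⟩
          have h1 := Set.ncard_le_ncard hcov (Set.toFinite _)
          have h2 := Set.ncard_union_le
            ((G.neighborSet x ∩ S) ∪ (G.neighborSet x ∩ Pset)) (T' ∩ B)
          have h3 := Set.ncard_union_le (G.neighborSet x ∩ S) (G.neighborSet x ∩ Pset)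
          have h4 := hnbrP x
          have h5 := hdeg x hxC
          omega
        have hd : Disjoint (G.neighborSet a ∩ S) (G.neighborSet u ∩ S) := by
          rw [Set.disjoint_left]
          rintro z ⟨hz1, _⟩ ⟨hz2, _⟩
          exact hcom a haC u (hBc u huB) hadj z ⟨hz1, hz2⟩
        have h6 : (G.neighborSet a ∩ S).ncard + (G.neighborSet u ∩ S).ncard ≤ k := by
          rw [← Set.ncard_union_eq hd (Set.toFinite _) (Set.toFinite _), ← hS]
          apply Set.ncard_le_ncard _ (Set.toFinite _)
          rintro z (⟨_, h⟩ | ⟨_, h⟩) <;> exact h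
        have h7 := hcnt a haB
        have h8 := hcnt u huB
        omega
      · push_neg at hEdge
        have hcov : G.neighborSet a ⊆ S := by
          intro z hz
          rcases hpart z with h | h | h
          · exact h
          · exact absurd hz (hBF a haB z h)
          · exact absurd h (hEdge z hz)
        have h1 := Set.ncard_le_ncard hcov (Set.toFinite _)
        have h2 := hdeg a haC
        rw [hS] at h1
        omega
    rcases bnd s₁ hs₁ with hb1 | ⟨hab1, hb1⟩ <;> rcases bnd s₂ hs₂ with hb2 | ⟨hab2, hb2⟩
    · by_cases hBex : ∃ s' ∈ Sσ, attB s'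
      · obtain ⟨s', hs', habs⟩ := hBex
        have hbβ := bndB s' hs' habs
        by_cases hcs1 : ConG G AH s' s₁
        · have hne2 : ¬ConG G AH s₂ s' := fun h => hns ((h.trans hcs1).symm)
          exact pairC s₂ hs₂ s' hs' hne2 hb2 hbβ
        · exact pairC s₁ hs₁ s' hs' (fun h => hcs1 h.symm) hb1 hbβ
      · push_neg at hBex
        have hBPT : B ⊆ Pset ∪ T' := by
          intro x hxB
          by_contra hxPT
          obtain ⟨NS, hsub, hcard, hcons⟩ := factB x ⟨hxB, hxPT⟩
          obtain ⟨σ, hσ⟩ := hNSne hsub hcard (by omega)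
          exact hBex σ (hsub hσ) ⟨x, ⟨hxB, hxPT⟩, hcons σ hσ⟩
        have h3 := hsum s₁ hs₁ s₂ hs₂ hns
        exact Ecase hBPT (by omega)
    · exact pairC s₁ hs₁ s₂ hs₂ hns hb1 hb2
    · exact pairC s₂ hs₂ s₁ hs₁ (fun h => hns h.symm) hb2 hb1
    · by_cases hFex : ∃ v, v ∈ F \ T'
      · obtain ⟨v, hv⟩ := hFex
        obtain ⟨NS, hsub, hcard, hcons⟩ := factA v hv
        obtain ⟨σ, hσ⟩ := hNSne hsub hcard (by omega)
        have hbσ := bndF σ (hsub hσ) ⟨v, hv, hcons σ hσ⟩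
        by_cases hcs1 : ConG G AH σ s₁
        · have hne2 : ¬ConG G AH σ s₂ := fun h => hns (hcs1.symm.trans h)
          exact pairC σ (hsub hσ) s₂ hs₂ hne2 hbσ hb2
        · exact pairC σ (hsub hσ) s₁ hs₁ hcs1 hbσ hb1
      · push_neg at hFex
        have hCF : C ∩ F ⊆ T' := by
          rintro c ⟨hcC, hcF⟩
          by_contra hcT
          exact hFex c ⟨hcF, hcT⟩
        have hcex : (C ∩ Sσ).Nonempty := by
          have hd : Disjoint (C ∩ S) (C ∩ F) := by
            rw [Set.disjoint_left]
            rintro x ⟨_, hxS⟩ ⟨_, hxF⟩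
            exact hFS x hxF hxS
          have he : (C ∩ S) ∪ (C ∩ F) = C := by
            ext x
            constructor
            · rintro (⟨h, _⟩ | ⟨h, _⟩) <;> exact h
            · intro hx
              rcases hC hx with h | h
              · exact Or.inl ⟨hx, h⟩
              · exact Or.inr ⟨hx, h⟩
          have hcc : (C ∩ S).ncard + (C ∩ F).ncard = k := by
            rw [← Set.ncard_union_eq hd (Set.toFinite _) (Set.toFinite _), he, hCcard]
          have h3 : (C ∩ F).ncard ≤ tF := by
            apply Set.ncard_le_ncard _ (Set.toFinite _)
            exact fun x hx => ⟨hCF hx, hx.2⟩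
          have h4 : (C ∩ S).ncard ≤ (C ∩ Sσ).ncard + tS := by
            have hsb : C ∩ S ⊆ (C ∩ Sσ) ∪ (T' ∩ S) := by
              rintro x ⟨hxC, hxS⟩
              by_cases hxT : x ∈ T'
              · exact Or.inr ⟨hxT, hxS⟩
              · exact Or.inl ⟨hxC, hxS, hxT⟩
            exact le_trans (Set.ncard_le_ncard hsb (Set.toFinite _))
              (Set.ncard_union_le _ _)
          apply Set.nonempty_of_ncard_ne_zero
          omega
        obtain ⟨c₀, hc₀⟩ := hcex
        have hbc := hCcount c₀ hCF
          (hCSσcls c₀ hc₀.2 c₀ hc₀ (ConG.refl (hSsubAH hc₀.2)))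
        by_cases hcs1 : ConG G AH c₀ s₁
        · have hne2 : ¬ConG G AH c₀ s₂ := fun h => hns (hcs1.symm.trans h)
          exact pairC c₀ hc₀.2 s₂ hs₂ hne2 hbc hb2
        · exact pairC c₀ hc₀.2 s₁ hs₁ hcs1 hbc hb1
  -- assemble
  have hSσne : Sσ.Nonempty := by
    apply Set.nonempty_of_ncard_ne_zero
    have h1 : tS ≤ T'.ncard := by
      apply Set.ncard_le_ncard (Set.inter_subset_left) (Set.toFinite _)
    omega
  obtain ⟨s₀, hs₀⟩ := hSσne
  have hallcon : ∀ x ∈ AH, ConG G AH x s₀ := by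
    intro x hx
    obtain ⟨hxP, hxT⟩ := (hAHmem x).1 hx
    rcases hpart x with h | h | h
    · exact hone x ⟨h, hxT⟩ s₀ hs₀
    · obtain ⟨NS, hsub, hcard, hcons⟩ := factA x ⟨h, hxT⟩
      obtain ⟨σ, hσ⟩ := hNSne hsub hcard (by omega)
      exact (hcons σ hσ).trans (hone σ (hsub hσ) s₀ hs₀)
    · obtain ⟨NS, hsub, hcard, hcons⟩ := factB x ⟨h, fun hh => hh.elim hxP hxT⟩
      obtain ⟨σ, hσ⟩ := hNSne hsub hcard (by omega)
      exact (hcons σ hσ).trans (hone σ (hsub hσ) s₀ hs₀)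
  have h2card : 2 ≤ (Tᶜ : Set ↥Psetᶜ).ncard := by
    have hsub : {z : ↥Psetᶜ | ↑z ∈ W \ T'} ⊆ Tᶜ := by
      intro z hz hzT
      exact hz.2 ⟨z, hzT, rfl⟩
    have hcard1 : ({z : ↥Psetᶜ | ↑z ∈ W \ T'}).ncard = (W \ T').ncard := by
      rw [← Set.ncard_image_of_injective _ Subtype.val_injective]
      congr 1
      ext x
      constructor
      · rintro ⟨z, hz, rfl⟩; exact hz
      · intro hx; exact ⟨⟨x, fun hP => (hWSB x hx.1).2 hP⟩, hx, rfl⟩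
    have h2 : W.ncard ≤ (W \ T').ncard + T'.ncard := by
      refine le_trans (Set.ncard_le_ncard ?_ (Set.toFinite _)) (Set.ncard_union_le _ _)
      intro x hx
      by_cases hxT : x ∈ T'
      · exact Or.inr hxT
      · exact Or.inl ⟨hx, hxT⟩
    have h3 := Set.ncard_le_ncard hsub (Set.toFinite _)
    omega
  refine ⟨h2card, ?_⟩
  rw [SimpleGraph.connected_iff]
  constructor
  · intro x y
    have hx : (↑↑x : V) ∈ AH := by
      rw [hAHmem]
      refine ⟨(↑x : ↥Psetᶜ).2, fun hT'' => ?_⟩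
      obtain ⟨z, hz, hze⟩ := hT''
      have : z = ↑x := Subtype.val_injective hze
      exact x.2 (this ▸ hz)
    have hy : (↑↑y : V) ∈ AH := by
      rw [hAHmem]
      refine ⟨(↑y : ↥Psetᶜ).2, fun hT'' => ?_⟩
      obtain ⟨z, hz, hze⟩ := hT''
      have : z = ↑y := Subtype.val_injective hze
      exact y.2 (this ▸ hz)
    have hc := (hallcon _ hx).trans ((hallcon _ hy).symm)
    have hsub1 : AH ⊆ (Psetᶜ : Set V) := fun z hz h => hz (Or.inl h)
    have l1 := con_lift hc hsub1 ((↑x : ↥Psetᶜ).2) ((↑y : ↥Psetᶜ).2)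
    have hsub2 : {z : ↥Psetᶜ | ↑z ∈ AH} ⊆ (Tᶜ : Set ↥Psetᶜ) := by
      intro z hz hzT
      exact ((hAHmem ↑z).1 hz).2 ⟨z, hzT, rfl⟩
    have l2 := con_lift l1 hsub2 x.2 y.2
    obtain ⟨wk, -⟩ := l2
    exact ⟨wk⟩
  · have : (Tᶜ : Set ↥Psetᶜ).Nonempty := by
      apply Set.nonempty_of_ncard_ne_zero
      omega
    exact this.to_subtype
end

section
/- Let S ⊆ V(K_{n,n}) with |S| = k ≤ n, where n = k + ⌈(m+1)/2⌉, and let G = K_{n,n}⟨S⟩ be the complete bipartite graph with a clique added on S. Then for any path P of order m contained in G - S, the graph G - V(P) is k-connected. -/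
open SimpleGraph Set

private lemma alt_count {V : Type*} (cond : V → Bool) :
    ∀ l : List V, l.Chain' (fun a b => cond a ≠ cond b) →
      l.countP cond ≤ (l.length + 1) / 2
  | [] => fun _ => by simp
  | [a] => fun _ => by
      rw [List.countP_cons]
      simp only [List.countP_nil, List.length]
      split <;> omega
  | a :: b :: rest => fun h => by
      have hab : cond a ≠ cond b := (List.isChain_cons_cons.mp h).1
      have hrest : rest.Chain' (fun a b => cond a ≠ cond b) :=
        ((List.isChain_cons_cons.mp h).2).tail
      have ih := alt_count cond rest hrest
      rw [List.countP_cons, List.countP_cons]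
      simp only [List.length]
      cases ha : cond a <;> cases hb : cond b <;> simp_all <;> omega

private lemma chain'_mono_mem {V : Type*} {R R' : V → V → Prop} :
    ∀ {l : List V}, (∀ a ∈ l, ∀ b ∈ l, R a b → R' a b) → l.Chain' R → l.Chain' R'
  | [], _, _ => List.isChain_nil
  | [a], _, _ => List.isChain_singleton a
  | a :: b :: l, h, hc => by
      rw [List.Chain', List.isChain_cons_cons] at hc ⊢
      exact ⟨h a (by simp) b (by simp) hc.1,
        chain'_mono_mem (fun x hx y hy hr =>
          h x (List.mem_cons_of_mem _ hx) y (List.mem_cons_of_mem _ hy) hr) hc.2⟩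


/-- Removing any path of order m avoiding S from K_{n,n}⟨S⟩, where
n = k + ⌈(m+1)/2⌉ and |S| = k ≤ n, leaves a k-connected graph. -/
theorem stmt14 (k m n : ℕ) (hn : n = k + (m + 2) / 2) (hkn : k ≤ n)
    (S : Set (Fin n ⊕ Fin n)) (hS : S.ncard = k)
    {a b : Fin n ⊕ Fin n}
    (p : (addClique (completeBipartiteGraph (Fin n) (Fin n)) S).Walk a b)
    (hp : p.IsPath) (hord : p.support.length = m)
    (hout : ∀ x ∈ p.support, x ∉ S) :
    KConn ((addClique (completeBipartiteGraph (Fin n) (Fin n)) S).induce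
      {x | x ∈ p.support}ᶜ) k := by
  intro T hT
  have hk1 : 1 ≤ k := by omega
  -- alternation of the path support
  have hchain : p.support.Chain' (fun a b => a.isLeft ≠ b.isLeft) := by
    refine chain'_mono_mem ?_ p.isChain_adj_support
    intro u hu w hw huw
    have hu' := hout u hu
    have hw' := hout w hw
    have hbip : (completeBipartiteGraph (Fin n) (Fin n)).Adj u w := by
      rcases huw with h | h
      · exact h
      · rw [fromRel_adj] at h
        rcases h.2 with ⟨h1, _⟩ | ⟨_, h1⟩ <;> exact absurd h1 hu'
    rcases u with u | u <;> rcases w with w | w <;> simp_all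
  have hcountL : p.support.countP (fun x => x.isLeft) ≤ (m + 1) / 2 := by
    have := alt_count (fun x => x.isLeft) p.support hchain
    rwa [hord] at this
  have hcountR : p.support.countP (fun x => x.isRight) ≤ (m + 1) / 2 := by
    have hchain' : p.support.Chain' (fun a b => a.isRight ≠ b.isRight) :=
      hchain.imp (fun {x y} h => by cases x <;> cases y <;> simp_all)
    have := alt_count (fun x => x.isRight) p.support hchain'
    rwa [hord] at this
  -- existence of an untouched vertex on each side
  have key : ∀ cond : (Fin n ⊕ Fin n) → Bool,
      {x : Fin n ⊕ Fin n | cond x = true}.ncard = n →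
      p.support.countP cond ≤ (m + 1) / 2 →
      ∃ x, cond x = true ∧ ∃ hx : x ∈ ({x | x ∈ p.support}ᶜ : Set (Fin n ⊕ Fin n)),
        (⟨x, hx⟩ : ({x | x ∈ p.support}ᶜ : Set (Fin n ⊕ Fin n))) ∈ Tᶜ := by
    intro cond hcard hcount
    classical
    by_contra hcon
    push_neg at hcon
    set L := {x : Fin n ⊕ Fin n | cond x = true} with hL
    set LP := {x : Fin n ⊕ Fin n | cond x = true ∧ x ∈ p.support} with hLP
    set B := (Subtype.val '' T : Set (Fin n ⊕ Fin n)) with hB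
    have hsub : L ⊆ LP ∪ B := by
      intro x hx
      rcases Classical.em (x ∈ p.support) with hxs | hxs
      · exact Or.inl ⟨hx, hxs⟩
      · have hxP : x ∈ ({x | x ∈ p.support}ᶜ : Set (Fin n ⊕ Fin n)) := hxs
        have h3 := hcon x hx hxP
        rw [Set.notMem_compl_iff] at h3
        exact Or.inr ⟨⟨x, hxP⟩, h3, rfl⟩
    have h1 : LP.ncard ≤ (m + 1) / 2 := by
      have hsub2 : LP ⊆ ↑((p.support.filter cond).toFinset) := by
        intro x ⟨h1, h2⟩
        simp [List.mem_filter, h1, h2]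
      calc LP.ncard ≤ (↑((p.support.filter cond).toFinset) : Set _).ncard :=
            Set.ncard_le_ncard hsub2 (Set.toFinite _)
        _ = (p.support.filter cond).toFinset.card := Set.ncard_coe_finset _
        _ ≤ (p.support.filter cond).length := List.toFinset_card_le _
        _ = p.support.countP cond := List.countP_eq_length_filter.symm
        _ ≤ (m + 1) / 2 := hcount
    have h2 : B.ncard ≤ k - 1 := by
      rw [hB, Set.ncard_image_of_injective _ Subtype.val_injective]
      omega
    have h3 : L.ncard ≤ LP.ncard + B.ncard :=
      (Set.ncard_le_ncard hsub (Set.toFinite _)).trans (Set.ncard_union_le _ _)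
    omega
  have hcardL : {x : Fin n ⊕ Fin n | (Sum.isLeft x : Bool) = true}.ncard = n := by
    have : {x : Fin n ⊕ Fin n | (Sum.isLeft x : Bool) = true} = Set.range Sum.inl := by
      ext x; cases x <;> simp
    rw [this, ← Set.image_univ, Set.ncard_image_of_injective _ Sum.inl_injective,
      Set.ncard_univ, Nat.card_eq_fintype_card, Fintype.card_fin]
  have hcardR : {x : Fin n ⊕ Fin n | (Sum.isRight x : Bool) = true}.ncard = n := by
    have : {x : Fin n ⊕ Fin n | (Sum.isRight x : Bool) = true} = Set.range Sum.inr := by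
      ext x; cases x <;> simp
    rw [this, ← Set.image_univ, Set.ncard_image_of_injective _ Sum.inr_injective,
      Set.ncard_univ, Nat.card_eq_fintype_card, Fintype.card_fin]
  obtain ⟨xl, hxl, hxlP, hxlT⟩ := key (fun x => x.isLeft) hcardL hcountL
  obtain ⟨xr, hxr, hxrP, hxrT⟩ := key (fun x => x.isRight) hcardR hcountR
  constructor
  · rw [show (2 : ℕ) = 1 + 1 from rfl, ← Nat.lt_iff_add_one_le,
      Set.one_lt_ncard_iff (Set.toFinite _)]
    refine ⟨⟨xl, hxlP⟩, ⟨xr, hxrP⟩, hxlT, hxrT, ?_⟩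
    intro h
    have : xl = xr := congrArg Subtype.val h
    subst this
    cases xl <;> simp_all
  · rw [connected_iff]
    have hadj : ∀ (u v : ↥(Tᶜ)), (u.1.1).isLeft = true → (v.1.1).isRight = true →
        (((addClique (completeBipartiteGraph (Fin n) (Fin n)) S).induce
          {x | x ∈ p.support}ᶜ).induce Tᶜ).Adj u v := by
      intro u v hu hv
      show (addClique (completeBipartiteGraph (Fin n) (Fin n)) S).Adj u.1.1 v.1.1
      exact Or.inl (Or.inl ⟨hu, hv⟩)
    set xL : ↥(Tᶜ) := ⟨⟨xl, hxlP⟩, hxlT⟩ with hxLdef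
    set xR : ↥(Tᶜ) := ⟨⟨xr, hxrP⟩, hxrT⟩ with hxRdef
    constructor
    · intro u v
      have hL : xL.1.1.isLeft = true := hxl
      have hR : xR.1.1.isRight = true := hxr
      rcases hu : u.1.1 with x | x <;> rcases hv : v.1.1 with y | y
      · exact ((hadj u xR (by rw [hu]; rfl) hR).reachable).trans
          ((hadj v xR (by rw [hv]; rfl) hR).reachable).symm
      · exact (hadj u v (by rw [hu]; rfl) (by rw [hv]; rfl)).reachable
      · exact ((hadj v u (by rw [hv]; rfl) (by rw [hu]; rfl)).reachable).symm
      · exact ((hadj xL u hL (by rw [hu]; rfl)).reachable).symm.trans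
          (hadj xL v hL (by rw [hv]; rfl)).reachable
    · exact ⟨xL⟩
end

section
/- Let G be a finite simple graph, P a path in G with G - V(P) k-connected, and let R be a terminal subpath of P of order l such that every vertex u of R satisfies |N_G(u) ∩ V(G - V(P))| ≥ k + 1. Then G - V(Q) is k-connected, where Q = P - V(R). -/
/-
Every vertex of `R` has at least `k + 1 ≥ k` neighbours in `G - V(P)`, so after deleting fewer
than `k` vertices it keeps a neighbour in what remains of the `k`-connected graph `G - V(P)`.
Hence `G - V(Q)`, obtained from `G - V(P)` by adding back `V(R)`, stays `k`-connected.
-/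

open SimpleGraph Set

theorem SimpleGraph.Connected.of_hom_of_forall_reachable {V W : Type*} {G : SimpleGraph V}
    {H : SimpleGraph W} (φ : G →g H) (hG : G.Connected) (hφ : ∀ w, ∃ v, H.Reachable w (φ v)) :
    H.Connected := by
  have : Nonempty W := ⟨φ hG.nonempty.some⟩
  refine Connected.mk fun w₁ w₂ => ?_
  obtain ⟨v₁, h₁⟩ := hφ w₁
  obtain ⟨v₂, h₂⟩ := hφ w₂
  exact h₁.trans (((hG v₁ v₂).map φ).trans h₂.symm)

theorem KConn.induce_of_subset {V : Type*} [Finite V] {G : SimpleGraph V} {A B : Set V} {k : ℕ}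
    (hAB : A ⊆ B) (hA : KConn (G.induce A) k)
    (hdeg : ∀ u ∈ B \ A, k ≤ (G.neighborSet u ∩ A).ncard) :
    KConn (G.induce B) k := by
  intro S hS
  set ι : A → B := Set.inclusion hAB
  have hι : Function.Injective ι := Set.inclusion_injective hAB
  have hS' : (ι ⁻¹' S).ncard < k :=
    (ncard_le_ncard_of_injOn ι (fun _ h => h) hι.injOn).trans_lt hS
  obtain ⟨hcard, hconn⟩ := hA _ hS'
  have hmaps : MapsTo ι (ι ⁻¹' S)ᶜ Sᶜ := fun _ h => h
  let φ := induceHom (G.induceHomOfLE hAB).toHom hmaps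
  refine ⟨hcard.trans (ncard_le_ncard_of_injOn ι hmaps hι.injOn), ?_⟩
  refine hconn.of_hom_of_forall_reachable φ fun u => ?_
  by_cases huA : u.1.1 ∈ A
  · exact ⟨⟨⟨u.1.1, huA⟩, u.2⟩, Reachable.refl _⟩
  · have hSV : (Subtype.val '' S).ncard < (G.neighborSet u.1.1 ∩ A).ncard :=
      ((ncard_image_of_injective S Subtype.val_injective).trans_lt hS).trans_le
        (hdeg u.1.1 ⟨u.1.2, huA⟩)
    obtain ⟨w, ⟨huw, hwA⟩, hwS⟩ := exists_mem_notMem_of_ncard_lt_ncard hSV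
    exact ⟨⟨⟨w, hwA⟩, fun hw => hwS ⟨_, hw, rfl⟩⟩, Adj.reachable huw⟩

theorem stmt15_general {V : Type*} [Fintype V] (G : SimpleGraph V) (k : ℕ)
    {a b : V} (p : G.Walk a b)
    (hGP : KConn (G.induce {x | x ∈ p.support}ᶜ) k)
    (qs rs : List V) (hsplit : p.support = qs ++ rs)
    (hdeg : ∀ u ∈ rs, k + 1 ≤ ((G.neighborSet u) ∩ {x | x ∉ p.support}).ncard) :
    KConn (G.induce {x | x ∈ qs}ᶜ) k := by
  have hQP : {x | x ∈ p.support}ᶜ ⊆ {x | x ∈ qs}ᶜ := fun x hx hxq =>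
    hx (hsplit ▸ List.mem_append_left rs hxq)
  refine hGP.induce_of_subset hQP fun u ⟨huq, hup⟩ => ?_
  have hur : u ∈ rs := by
    simp only [mem_compl_iff, mem_ofPred_eq, not_not, hsplit, List.mem_append] at huq hup
    exact hup.resolve_left huq
  exact (hdeg u hur).trans' k.le_succ

/-- If G - V(P) is k-connected and R is a terminal subpath of P of order l all
of whose vertices have at least k+1 neighbors outside P, then G - V(Q) is
k-connected, where Q = P - V(R). -/
theorem stmt15 {V : Type*} [Fintype V] (G : SimpleGraph V) (k l : ℕ)
    {a b : V} (p : G.Walk a b) (hp : p.IsPath)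
    (hGP : KConn (G.induce {x | x ∈ p.support}ᶜ) k)
    (qs rs : List V) (hsplit : p.support = qs ++ rs) (hl : rs.length = l)
    (hdeg : ∀ u ∈ rs, k + 1 ≤ ((G.neighborSet u) ∩ {x | x ∉ p.support}).ncard) :
    KConn (G.induce {x | x ∈ qs}ᶜ) k :=
  stmt15_general G k p hGP qs rs hsplit hdeg
end
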